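/- arXiv:1103.1622 — 12 statements merged into one kernel-verified Lean document; each statement's English description precedes it below -/
import Mathlib

section
/- There exists a real constant c with 0 < c ≤ 1 such that for infinitely many positive integers n there is an NFA M with n states over a fixed finite alphabet for which the complement of L(M) is nonempty and every string not in L(M) has length at least 2^{cn}. -/
/-!
Over the alphabet `Option Bool`, with `none` as a separator, list the `k`-bit binary numbers
`0, 1, …, 2 ^ k - 1`, least significant bit first, each followed by a separator. A word that
starts with the block of `0`s, ends with the block of `1`s, and in which every letter arises
from the letter `k + 1` places earlier by adding the carry, must contain this whole count, so its
length is at least `(k + 1) * 2 ^ k`. The failure of each of the three conditions is detected by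
an NFA with `O(k)` states (for the last one: guess the faulty position, then count `k` letters),
so the union of these NFAs has `5 * k + 12` states and its complement consists exactly of such
words, the count itself among them.
-/

namespace NFA

variable {α σ τ : Type*}

theorem evalFrom_empty (M : NFA α σ) (w : List α) : M.evalFrom ∅ w = ∅ := by
  induction w with
  | nil => rfl
  | cons a w ih => rwa [evalFrom_cons, stepSet_empty]

theorem evalFrom_image {M : NFA α σ} {N : NFA α τ} (f : σ → τ)
    (hf : ∀ s a, N.step (f s) a = f '' M.step s a) (S : Set σ) (w : List α) :
    N.evalFrom (f '' S) w = f '' M.evalFrom S w := by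
  induction w generalizing S with
  | nil => rfl
  | cons a w ih =>
    have : N.stepSet (f '' S) a = f '' M.stepSet S a := by
      simp only [stepSet, Set.biUnion_image, hf, Set.image_iUnion₂]
    rw [evalFrom_cons, evalFrom_cons, this, ih]

def sum (M : NFA α σ) (N : NFA α τ) : NFA α (σ ⊕ τ) where
  step := Sum.elim (fun s a => Sum.inl '' M.step s a) (fun t a => Sum.inr '' N.step t a)
  start := Sum.inl '' M.start ∪ Sum.inr '' N.start
  accept := Sum.elim M.accept N.accept

theorem mem_sum_accepts {M : NFA α σ} {N : NFA α τ} {w : List α} :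
    w ∈ (M.sum N).accepts ↔ w ∈ M.accepts ∨ w ∈ N.accepts := by
  simp only [mem_accepts, sum, evalFrom_union]
  rw [evalFrom_image Sum.inl (fun _ _ => rfl), evalFrom_image Sum.inr (fun _ _ => rfl)]
  simp [Sum.exists]
  exact Iff.rfl

def embed (M : NFA α σ) (f : σ ↪ τ) : NFA α τ where
  step t a := ⋃ s, ⋃ (_ : f s = t), f '' M.step s a
  start := f '' M.start
  accept := f '' M.accept

theorem accepts_embed (M : NFA α σ) (f : σ ↪ τ) : (M.embed f).accepts = M.accepts := by
  have hstep (s : σ) (a : α) : (M.embed f).step (f s) a = f '' M.step s a := by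
    simp [embed, f.injective.eq_iff]
  ext w
  simp only [mem_accepts]
  rw [show (M.embed f).start = f '' M.start from rfl, evalFrom_image f hstep]
  simp [embed, f.injective.eq_iff]

end NFA

namespace DFA

variable {α : Type*} [DecidableEq α]

/-- The state `some i` records that the first `i` letters of `u` have been read;
`none` records a mismatch. -/
def prefixMatcher (u : List α) : DFA α (Option (Fin (u.length + 1))) where
  step
    | none, _ => none
    | some i, a =>
      if h : (i : ℕ) < u.length then if u[i] = a then some ⟨i + 1, by omega⟩ else none
      else some i
  start := some 0
  accept := {some (Fin.last _)}

theorem prefixMatcher_step_none (u : List α) (a : α) : (prefixMatcher u).step none a = none :=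
  rfl

theorem prefixMatcher_step_some (u : List α) (a : α) (i : Fin (u.length + 1))
    (hi : (i : ℕ) < u.length) :
    (prefixMatcher u).step (some i) a =
      if u[(i : ℕ)] = a then some ⟨i + 1, by omega⟩ else none :=
  dif_pos hi

theorem prefixMatcher_step_last (u : List α) (a : α) :
    (prefixMatcher u).step (some (Fin.last _)) a = some (Fin.last _) :=
  dif_neg (by simp)

theorem prefixMatcher_evalFrom_none (u w : List α) :
    (prefixMatcher u).evalFrom none w = none := by
  induction w with
  | nil => rfl
  | cons a w ih => rwa [evalFrom_cons, prefixMatcher_step_none]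

theorem prefixMatcher_evalFrom_last (u w : List α) :
    (prefixMatcher u).evalFrom (some (Fin.last _)) w = some (Fin.last _) := by
  induction w with
  | nil => rfl
  | cons a w ih => rwa [evalFrom_cons, prefixMatcher_step_last]

theorem prefixMatcher_evalFrom_eq_last_iff (u w : List α) (i : Fin (u.length + 1)) :
    (prefixMatcher u).evalFrom (some i) w = some (Fin.last _) ↔ u.drop i <+: w := by
  induction w generalizing i with
  | nil =>
    simp only [evalFrom_nil, Option.some.injEq, Fin.ext_iff, Fin.val_last, List.prefix_nil,
      List.drop_eq_nil_iff]
    omega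
  | cons a w ih =>
    by_cases hi : (i : ℕ) < u.length
    · rw [List.drop_eq_getElem_cons hi, List.cons_prefix_cons, evalFrom_cons,
        prefixMatcher_step_some u a i hi]
      by_cases ha : u[(i : ℕ)] = a
      · simpa [ha] using ih ⟨i + 1, by omega⟩
      · simp [ha, prefixMatcher_evalFrom_none]
    · obtain rfl : i = Fin.last _ := Fin.ext (by have := i.isLt; simp; omega)
      simp [evalFrom_cons, prefixMatcher_step_last, prefixMatcher_evalFrom_last]

theorem mem_prefixMatcher_accepts {u w : List α} :
    w ∈ (prefixMatcher u).accepts ↔ u <+: w := by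
  change (prefixMatcher u).evalFrom (some 0) w = some (Fin.last _) ↔ _
  simpa using prefixMatcher_evalFrom_eq_last_iff u w 0

end DFA

namespace NFA

variable {α : Type*} [DecidableEq α]

def lacksPrefix (u : List α) : NFA α (Option (Fin (u.length + 1))) :=
  (DFA.prefixMatcher u)ᶜ.toNFA

theorem mem_lacksPrefix_accepts {u w : List α} : w ∈ (lacksPrefix u).accepts ↔ ¬ u <+: w := by
  rw [lacksPrefix, DFA.toNFA_correct, DFA.accepts_compl]
  exact not_congr DFA.mem_prefixMatcher_accepts

def lacksSuffix (u : List α) : NFA α (Option (Fin (u.reverse.length + 1))) :=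
  (lacksPrefix u.reverse).reverse

theorem mem_lacksSuffix_accepts {u w : List α} : w ∈ (lacksSuffix u).accepts ↔ ¬ u <:+ w := by
  rw [lacksSuffix, mem_accepts_reverse, mem_lacksPrefix_accepts, List.reverse_prefix]

end NFA

theorem Nat.testBit_succ_eq_xor (n j : ℕ) :
    (n + 1).testBit j = (n.testBit j ^^ decide (∀ t < j, n.testBit t = true)) := by
  induction j generalizing n with
  | zero =>
    simp only [Nat.testBit_zero, Nat.not_lt_zero, IsEmpty.forall_iff, implies_true, decide_true,
      Bool.xor_true]
    rcases Nat.mod_two_eq_zero_or_one n with h | h <;> simp [h, Nat.add_mod]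
  | succ j ih =>
    simp only [Nat.forall_lt_succ_left, Nat.testBit_add_one, Nat.testBit_zero]
    rcases Nat.mod_two_eq_zero_or_one n with h | h
    · simp [h, show (n + 1) / 2 = n / 2 by omega]
    · simp [h, show (n + 1) / 2 = n / 2 + 1 by omega, ih]

theorem Nat.two_pow_sub_one_le_of_testBit {n k : ℕ} (h : ∀ j < k, n.testBit j = true) :
    2 ^ k - 1 ≤ n :=
  Nat.le_of_testBit fun j hj => h j (by simpa [Nat.testBit_two_pow_sub_one] using hj)

theorem Nat.exists_eq_succ_mul_add (k q : ℕ) : ∃ m j, j ≤ k ∧ q = (k + 1) * m + j :=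
  ⟨q / (k + 1), q % (k + 1), Nat.lt_succ_iff.mp (Nat.mod_lt _ k.succ_pos),
    (Nat.div_add_mod q (k + 1)).symm⟩

namespace BinaryCounter

/-- The carry flag after reading letter `a`: a separator `none` starts a new number, whose
least significant bit receives a carry; a bit passes the carry on iff it is `1`. -/
def carryStep (c : Bool) : Option Bool → Bool
  | none => true
  | some b => c && b

def carry (w : List (Option Bool)) : Bool :=
  w.foldl carryStep true

def bump (c : Bool) (a : Option Bool) : Option Bool :=
  a.map (· ^^ c)

def CountsUp (k : ℕ) (w : List (Option Bool)) : Prop :=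
  ∀ q (h : q + k + 1 < w.length), w[q + k + 1] = bump (carry (w.take q)) w[q]

def zeroBlock (k : ℕ) : List (Option Bool) :=
  List.replicate k (some false) ++ [none]

def oneBlock (k : ℕ) : List (Option Bool) :=
  List.replicate k (some true) ++ [none]

def IsCount (k : ℕ) (w : List (Option Bool)) : Prop :=
  zeroBlock k <+: w ∧ oneBlock k <:+ w ∧ CountsUp k w

/-- The `p`-th letter of the infinite word listing the `k`-bit binary representations, least
significant bit first, of `0, 1, 2, …`, each followed by the separator `none`. -/
def counterLetter (k p : ℕ) : Option Bool :=
  if p % (k + 1) = k then none else some ((p / (k + 1)).testBit (p % (k + 1)))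

def counterWord (k : ℕ) : List (Option Bool) :=
  (List.range ((k + 1) * 2 ^ k)).map (counterLetter k)

theorem counterLetter_mul_add {k j : ℕ} (m : ℕ) (hj : j ≤ k) :
    counterLetter k ((k + 1) * m + j) = if j = k then none else some (m.testBit j) := by
  have hmod : ((k + 1) * m + j) % (k + 1) = j := by
    rw [Nat.mul_add_mod, Nat.mod_eq_of_lt (by omega)]
  have hdiv : ((k + 1) * m + j) / (k + 1) = m := by
    rw [Nat.mul_add_div (by omega), Nat.div_eq_of_lt (by omega), add_zero]
  simp only [counterLetter, hmod, hdiv]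

theorem carry_append_singleton (w : List (Option Bool)) (a : Option Bool) :
    carry (w ++ [a]) = carryStep (carry w) a := by
  simp [carry]

theorem carry_counterLetter {k j : ℕ} (m : ℕ) (hj : j ≤ k) :
    carry ((List.range ((k + 1) * m + j)).map (counterLetter k)) =
      decide (∀ t < j, m.testBit t = true) := by
  induction j with
  | zero =>
    cases m with
    | zero => rfl
    | succ m =>
      rw [show (k + 1) * (m + 1) + 0 = (k + 1) * m + k + 1 by ring, List.range_succ,
        List.map_append, List.map_singleton, carry_append_singleton,
        counterLetter_mul_add m le_rfl]
      simp [carryStep]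
  | succ j ih =>
    rw [← add_assoc, List.range_succ, List.map_append, List.map_singleton, carry_append_singleton,
      counterLetter_mul_add m (by omega), ih (by omega), if_neg (by omega)]
    simp only [carryStep, Nat.forall_lt_succ_right, Bool.decide_and, Bool.decide_eq_true]

theorem counterLetter_add_succ (k q : ℕ) :
    counterLetter k (q + k + 1) =
      bump (carry ((List.range q).map (counterLetter k))) (counterLetter k q) := by
  obtain ⟨m, j, hj, rfl⟩ := Nat.exists_eq_succ_mul_add k q
  rw [show (k + 1) * m + j + k + 1 = (k + 1) * (m + 1) + j by ring,
    counterLetter_mul_add _ hj, counterLetter_mul_add _ hj, carry_counterLetter _ hj]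
  split_ifs
  · rfl
  · simp [bump, Nat.testBit_succ_eq_xor]

theorem take_counterWord {k q : ℕ} (hq : q ≤ (k + 1) * 2 ^ k) :
    (counterWord k).take q = (List.range q).map (counterLetter k) := by
  rw [counterWord, ← List.map_take, List.take_range, min_eq_left hq]

theorem map_counterLetter_range_eq_zeroBlock (k : ℕ) :
    (List.range (k + 1)).map (counterLetter k) = zeroBlock k := by
  refine List.ext_getElem (by simp [zeroBlock]) fun j hj _ => ?_
  have hj : j ≤ k := by simpa using hj
  have := counterLetter_mul_add (k := k) 0 hj
  rw [mul_zero, zero_add] at this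
  rw [List.getElem_map, List.getElem_range, this]
  rcases hj.lt_or_eq with hj | rfl
  · simp [zeroBlock, List.getElem_append_left, hj, hj.ne]
  · simp [zeroBlock]

theorem counterWord_eq_append_oneBlock (k : ℕ) :
    counterWord k = (List.range ((k + 1) * (2 ^ k - 1))).map (counterLetter k) ++ oneBlock k := by
  have hsplit : (k + 1) * 2 ^ k = (k + 1) * (2 ^ k - 1) + (k + 1) := by
    have := Nat.one_le_two_pow (n := k)
    rw [← mul_add_one, Nat.sub_add_cancel this]
  rw [counterWord, hsplit, List.range_add, List.map_append, List.map_map]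
  congr 1
  refine List.ext_getElem (by simp [oneBlock]) fun j hj _ => ?_
  have hj : j ≤ k := by simpa using hj
  rw [List.getElem_map, List.getElem_range, Function.comp_apply, counterLetter_mul_add _ hj]
  rcases hj.lt_or_eq with hj | rfl
  · simp [oneBlock, List.getElem_append_left, hj, hj.ne, Nat.testBit_two_pow_sub_one]
  · simp [oneBlock]

theorem isCount_counterWord (k : ℕ) : IsCount k (counterWord k) := by
  refine ⟨?_, ?_, ?_⟩
  · rw [← map_counterLetter_range_eq_zeroBlock,
      ← take_counterWord (Nat.le_mul_of_pos_right _ (Nat.two_pow_pos k))]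
    exact List.take_prefix _ _
  · rw [counterWord_eq_append_oneBlock]
    exact List.suffix_append _ _
  · intro q hq
    have hlen : (counterWord k).length = (k + 1) * 2 ^ k := by simp [counterWord]
    rw [take_counterWord (by omega)]
    simp only [counterWord, List.getElem_map, List.getElem_range]
    exact counterLetter_add_succ k q

theorem IsCount.getElem_eq {k : ℕ} {w : List (Option Bool)} (hw : IsCount k w) (p : ℕ)
    (hp : p < w.length) : w[p] = counterLetter k p := by
  induction p using Nat.strong_induction_on with
  | _ p ih =>
    rcases lt_or_ge p (k + 1) with hpk | hpk
    · rw [← hw.1.getElem (by simpa [zeroBlock] using hpk)]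
      simp only [← map_counterLetter_range_eq_zeroBlock, List.getElem_map, List.getElem_range]
    · obtain ⟨q, rfl⟩ : ∃ q, p = q + k + 1 := ⟨p - (k + 1), by omega⟩
      have htake : w.take q = (List.range q).map (counterLetter k) :=
        List.ext_getElem (by simp; omega) fun i hi _ => by
          simpa using ih i (by simp at hi; omega) (by simp at hi; omega)
      rw [hw.2.2 q (by omega), htake, ih q (by omega), counterLetter_add_succ]

theorem IsCount.length_ge {k : ℕ} {w : List (Option Bool)} (hw : IsCount k w) :
    (k + 1) * 2 ^ k ≤ w.length := by
  obtain ⟨x, rfl⟩ := hw.2.1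
  have hlen : (x ++ oneBlock k).length = x.length + (k + 1) := by simp [oneBlock]
  have hletter (j : ℕ) (hj : j ≤ k) :
      counterLetter k (x.length + j) = if j = k then none else some true := by
    rw [← hw.getElem_eq _ (by omega), List.getElem_append_right (by omega)]
    rcases hj.lt_or_eq with hj | rfl
    · simp [oneBlock, List.getElem_append_left, hj, hj.ne]
    · simp [oneBlock]
  obtain ⟨m, j, hj, hx⟩ := Nat.exists_eq_succ_mul_add k x.length
  obtain rfl : j = 0 := by
    by_contra hj0
    have := hletter k le_rfl
    rw [hx, show (k + 1) * m + j + k = (k + 1) * (m + 1) + (j - 1) by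
      rw [mul_add_one]; omega, counterLetter_mul_add _ (by omega), if_neg (by omega)] at this
    simp at this
  have hbits : ∀ t < k, m.testBit t = true := fun t ht => by
    simpa [hx, counterLetter_mul_add _ ht.le, ht.ne] using hletter t ht.le
  have := Nat.two_pow_sub_one_le_of_testBit hbits
  rw [hlen, hx, add_zero, ← mul_add_one]
  exact Nat.mul_le_mul_left _ (by omega)

inductive CheckerState (k : ℕ)
  | scan (carry : Bool)
  | wait (expected : Option Bool) (r : Fin (k + 1))
  | found
  deriving Fintype

open CheckerState

/-- Scans the word while tracking the carry, guesses a letter `a`, and then checks `k + 1`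
letters later that the letter differs from `bump carry a`. -/
def incrementChecker (k : ℕ) : NFA (Option Bool) (CheckerState k) where
  step
    | scan c, a => {scan (carryStep c a), wait (bump c a) (Fin.last k)}
    | wait e ⟨0, _⟩, b => {s | b ≠ e ∧ s = found}
    | wait e ⟨r + 1, h⟩, _ => {wait e ⟨r, by omega⟩}
    | found, _ => {found}
  start := {scan true}
  accept := {found}

theorem incrementChecker_evalFrom_found (k : ℕ) (w : List (Option Bool)) :
    (incrementChecker k).evalFrom {found} w = {found} := by
  induction w with
  | nil => rfl
  | cons a w ih => rwa [NFA.evalFrom_cons, NFA.stepSet_singleton]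

theorem found_mem_evalFrom_wait_iff {k : ℕ} (e : Option Bool) (r : Fin (k + 1))
    (w : List (Option Bool)) :
    found ∈ (incrementChecker k).evalFrom {wait e r} w ↔
      ∃ h : (r : ℕ) < w.length, w[r] ≠ e := by
  induction w generalizing r with
  | nil => simp
  | cons b w ih =>
    rw [NFA.evalFrom_cons, NFA.stepSet_singleton]
    obtain ⟨_ | r, hr⟩ := r
    · change found ∈ NFA.evalFrom _ {s | b ≠ e ∧ s = found} w ↔ _
      by_cases hb : b = e
      · simp [hb, NFA.evalFrom_empty]
      · simp [hb, incrementChecker_evalFrom_found]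
    · change found ∈ NFA.evalFrom _ {wait e ⟨r, by omega⟩} w ↔ _
      simpa using ih ⟨r, by omega⟩

theorem found_mem_evalFrom_scan_iff {k : ℕ} (c : Bool) (w : List (Option Bool)) :
    found ∈ (incrementChecker k).evalFrom {scan c} w ↔
      ∃ q, ∃ h : q + k + 1 < w.length,
        w[q + k + 1] ≠ bump ((w.take q).foldl carryStep c) w[q] := by
  induction w generalizing c with
  | nil => simp
  | cons a w ih =>
    have hstep : (incrementChecker k).step (scan c) a =
        {scan (carryStep c a)} ∪ {wait (bump c a) (Fin.last k)} := rfl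
    rw [NFA.evalFrom_cons, NFA.stepSet_singleton, hstep, NFA.evalFrom_union, Set.mem_union, ih,
      found_mem_evalFrom_wait_iff, or_comm]
    conv_rhs => rw [← Nat.or_exists_add_one]
    simp [add_right_comm _ 1 k]

theorem mem_incrementChecker_accepts {k : ℕ} {w : List (Option Bool)} :
    w ∈ (incrementChecker k).accepts ↔ ¬ CountsUp k w := by
  have hacc : w ∈ (incrementChecker k).accepts ↔
      found ∈ (incrementChecker k).evalFrom {scan true} w := by
    simp [NFA.mem_accepts, incrementChecker]
  rw [hacc, found_mem_evalFrom_scan_iff]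
  simp [CountsUp, carry]

abbrev CounterState (k : ℕ) : Type :=
  Option (Fin ((zeroBlock k).length + 1)) ⊕ Option (Fin ((oneBlock k).reverse.length + 1)) ⊕
    CheckerState k

def counterNFA (k : ℕ) : NFA (Option Bool) (CounterState k) :=
  (NFA.lacksPrefix (zeroBlock k)).sum ((NFA.lacksSuffix (oneBlock k)).sum (incrementChecker k))

theorem mem_counterNFA_accepts {k : ℕ} {w : List (Option Bool)} :
    w ∈ (counterNFA k).accepts ↔ ¬ IsCount k w := by
  simp only [counterNFA, NFA.mem_sum_accepts, NFA.mem_lacksPrefix_accepts,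
    NFA.mem_lacksSuffix_accepts, mem_incrementChecker_accepts, IsCount, not_and_or]

theorem card_counterState (k : ℕ) : Fintype.card (CounterState k) = 5 * k + 12 := by
  simp [zeroBlock, oneBlock, Fintype.ofEquiv_card]
  ring

theorem exists_nfa_complement_nonempty_length_ge (k : ℕ) {n : ℕ} (hn : 5 * k + 12 ≤ n) :
    ∃ M : NFA (Option Bool) (Fin n),
      (∃ x, x ∉ M.accepts) ∧ ∀ x, x ∉ M.accepts → (k + 1) * 2 ^ k ≤ x.length := by
  obtain ⟨f⟩ := Function.Embedding.nonempty_of_card_le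
    (α := CounterState k) (β := Fin n) (by rwa [card_counterState, Fintype.card_fin])
  refine ⟨(counterNFA k).embed f, ⟨counterWord k, ?_⟩, fun x hx => ?_⟩ <;>
    rw [NFA.accepts_embed, mem_counterNFA_accepts, not_not] at *
  · exact isCount_counterWord k
  · exact hx.length_ge

end BinaryCounter

/-- There is a constant `c` with `0 < c ≤ 1` such that for infinitely many `n`
there is an `n`-state NFA (over a fixed finite alphabet) whose complement is
nonempty but every string not accepted has length at least `2^(c·n)`. -/
theorem nfa_complement_shortest_string_lower_bound :
    ∃ c : ℝ, 0 < c ∧ c ≤ 1 ∧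
      ∃ (α : Type) (_ : Fintype α),
        {n : ℕ | 0 < n ∧
          ∃ M : NFA α (Fin n),
            (∃ x : List α, x ∉ M.accepts) ∧
            ∀ x : List α, x ∉ M.accepts →
              (2 : ℝ) ^ (c * n) ≤ x.length}.Infinite := by
  refine ⟨1 / 17, by norm_num, by norm_num, Option Bool, inferInstance, ?_⟩
  refine Set.infinite_of_injective_forall_mem (f := fun k : ℕ => 17 * (k + 1))
    (fun a b h => by simpa using h) fun k => ⟨by omega, ?_⟩
  obtain ⟨M, hne, hlen⟩ :=
    BinaryCounter.exists_nfa_complement_nonempty_length_ge (k + 1) (n := 17 * (k + 1)) (by omega)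
  refine ⟨M, hne, fun x hx => ?_⟩
  have hexp : (1 / 17 : ℝ) * ((17 * (k + 1) : ℕ) : ℝ) = ((k + 1 : ℕ) : ℝ) := by
    push_cast; ring
  rw [hexp, Real.rpow_natCast]
  exact_mod_cast (Nat.le_mul_of_pos_left _ (by omega)).trans (hlen x hx)
end

section
/- For all integers m, n ≥ 1 there exist DFAs M₁ and M₂ over the two-letter alphabet {0,1}, where M₁ has exactly m states and M₂ has exactly n states, such that L(M₁) ∩ L(M₂) is nonempty, some string of length m·n − 1 belongs to L(M₁) ∩ L(M₂), and every string in L(M₁) ∩ L(M₂) has length at least m·n − 1 (i.e., the shortest string in the intersection has length exactly m·n − 1). -/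
/-!
`onesMod m` counts the letters `1` modulo `m` and accepts a count `≡ 0`. For `m ≤ n`,
`blocks m n` reads blocks `1^(m-1) 0^(n-m+1)`: its states `j < m - 1` count the `1`s of the
current block, the others its `0`s, and a `1` read in the second phase restarts the block. A
completed block moves `onesMod m` by `m - 1 ≡ -1`, so a common accepted word needs `m - 1`
complete blocks followed by `1^(m-1) 0^(n-m)`, of total length `(m - 1) n + (n - 1) = m n - 1`.

For the lower bound, the block index `k = min j (m - 1) - i` (mod `m`) of a pair of states
`(i, j)` yields the potential `k n + j` on the product automaton; it grows by at most one per
letter, is `0` at the start and `m n - 1` at the accepting pair. The case `n < m` follows by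
symmetry.
-/

namespace DFA

variable {α σ : Type*} (M : DFA α σ)

theorem potential_evalFrom_le (φ : σ → ℕ) (hφ : ∀ s a, φ (M.step s a) ≤ φ s + 1)
    (s : σ) (x : List α) : φ (M.evalFrom s x) ≤ φ s + x.length := by
  induction x generalizing s with
  | nil => simp
  | cons a x ih =>
    rw [evalFrom_cons, List.length_cons]
    linarith [ih (M.step s a), hφ s a]

theorem evalFrom_flatten_replicate {s : σ} {w : List α} (hw : M.evalFrom s w = s) (k : ℕ) :
    M.evalFrom s (List.replicate k w).flatten = s := by
  induction k with
  | zero => rfl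
  | succ k ih => rw [List.replicate_succ, List.flatten_cons, evalFrom_of_append, hw, ih]

end DFA

theorem Nat.sub_one_mul_add_sub_one {m : ℕ} (hm : 1 ≤ m) (n : ℕ) :
    (m - 1) * n + (n - 1) = m * n - 1 := by
  obtain ⟨m, rfl⟩ := Nat.exists_eq_add_of_le' hm
  rcases n with _ | n
  · simp
  · rw [Nat.add_sub_cancel, add_mul, one_mul]
    omega

namespace TightIntersection

open DFA
open scoped Fin.CommRing Fin.NatCast

theorem natCast_pred_eq_neg_one (m : ℕ) [NeZero m] : ((m - 1 : ℕ) : Fin m) = -1 := by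
  rw [Nat.cast_pred (Nat.pos_of_neZero m), Fin.natCast_self, zero_sub]

def onesMod (m : ℕ) [NeZero m] : DFA (Fin 2) (Fin m) where
  step i a := if a = 1 then i + 1 else i
  start := 0
  accept := {0}

theorem onesMod_evalFrom {m : ℕ} [NeZero m] (i : Fin m) (x : List (Fin 2)) :
    (onesMod m).evalFrom i x = i + ((x.count 1 : ℕ) : Fin m) := by
  induction x generalizing i with
  | nil => simp
  | cons a x ih =>
    rw [evalFrom_cons, ih, List.count_cons]
    by_cases ha : a = 1
    · simp only [onesMod, ha, if_true, BEq.rfl, Nat.cast_add, Nat.cast_one]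
      ring
    · simp [onesMod, ha]

def blocks (m n : ℕ) [NeZero n] : DFA (Fin 2) (Fin n) where
  step j a :=
    if (j : ℕ) + 1 < m then (if a = 1 then j + 1 else j)
    else (if a = 1 then 0 else j + 1)
  start := 0
  accept := {j | (j : ℕ) = n - 1}

section blocks

variable {m n : ℕ} [NeZero n]

theorem blocks_step_val_succ {j : Fin n} {a : Fin 2} (hj : (j : ℕ) + 1 < n)
    (ha : a = if (j : ℕ) + 1 < m then 1 else 0) :
    ((blocks m n).step j a : ℕ) = j + 1 := by
  have : ((j + 1 : Fin n) : ℕ) = j + 1 := Fin.val_add_one_of_lt' hj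
  simp only [blocks]
  split_ifs at ha ⊢ <;> simp_all

theorem blocks_evalFrom_replicate_one (hmn : m ≤ n) (j : Fin n) (k : ℕ)
    (hk : (j : ℕ) + k < m) :
    ((blocks m n).evalFrom j (List.replicate k 1) : ℕ) = j + k := by
  induction k generalizing j with
  | zero => simp
  | succ k ih =>
    rw [List.replicate_succ, evalFrom_cons]
    have hstep := blocks_step_val_succ (m := m) (j := j) (a := 1) (by omega) (by simp; omega)
    rw [ih _ (by omega), hstep]
    ring

theorem blocks_evalFrom_replicate_zero (j : Fin n) (k : ℕ) (hj : m ≤ (j : ℕ) + 1)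
    (hk : (j : ℕ) + k < n) :
    ((blocks m n).evalFrom j (List.replicate k 0) : ℕ) = j + k := by
  induction k generalizing j with
  | zero => simp
  | succ k ih =>
    rw [List.replicate_succ, evalFrom_cons]
    have hstep := blocks_step_val_succ (m := m) (j := j) (a := 0) (by omega) (by simp; omega)
    rw [ih _ (by omega) (by omega), hstep]
    ring

theorem blocks_step_zero_of_succ_eq (hmn : m ≤ n) {j : Fin n} (hj : (j : ℕ) + 1 = n) :
    (blocks m n).step j 0 = 0 := by
  simp only [blocks, if_neg (show ¬(j : ℕ) + 1 < m by omega), Fin.isValue, zero_ne_one, if_false]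
  ext
  rw [Fin.val_add, Fin.val_one', Nat.add_mod_mod, hj, Nat.mod_self]
  rfl

end blocks

def blockIndex {m n : ℕ} [NeZero m] (i : Fin m) (j : Fin n) : Fin m :=
  ((min (j : ℕ) (m - 1) : ℕ) : Fin m) - i

def potential {m n : ℕ} [NeZero m] (p : Fin m × Fin n) : ℕ :=
  (blockIndex p.1 p.2 : ℕ) * n + p.2

section product

variable {m n : ℕ} [NeZero m] [NeZero n]

theorem blockIndex_step (hmn : m ≤ n) (i : Fin m) (j : Fin n) (a : Fin 2) :
    let i' := (onesMod m).step i a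
    let j' := (blocks m n).step j a
    (blockIndex i' j' = blockIndex i j ∧ (j' : ℕ) ≤ j + 1) ∨
      (blockIndex i' j' = blockIndex i j + 1 ∧ (j' : ℕ) = 0 ∧ (j : ℕ) + 1 = n) := by
  intro i' j'
  have hlast := natCast_pred_eq_neg_one m
  by_cases hjm : (j : ℕ) + 1 < m
  · obtain rfl | rfl : a = 0 ∨ a = 1 := by omega
    · simp [i', j', onesMod, blocks, hjm]
    · have hj' : (j' : ℕ) = j + 1 := blocks_step_val_succ (by omega) (by simp [hjm])
      left
      refine ⟨?_, hj'.le⟩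
      have hmin : min (j : ℕ) (m - 1) = j := min_eq_left (by omega)
      have hmin' : min ((j : ℕ) + 1) (m - 1) = j + 1 := min_eq_left (by omega)
      simp only [blockIndex, hj', i', onesMod, if_true, hmin, hmin']
      push_cast
      ring
  · have hmin : min (j : ℕ) (m - 1) = m - 1 := min_eq_right (by omega)
    obtain rfl | rfl : a = 0 ∨ a = 1 := by omega
    · have hi' : i' = i := by simp [i', onesMod]
      by_cases hjn : (j : ℕ) + 1 < n
      · have hj' : (j' : ℕ) = j + 1 := blocks_step_val_succ hjn (by simp [hjm])
        left
        refine ⟨?_, hj'.le⟩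
        simp only [blockIndex, hi', hj', hmin, min_eq_right (by omega : m - 1 ≤ (j : ℕ) + 1)]
      · have hj' : j' = 0 := blocks_step_zero_of_succ_eq (by omega) (by omega)
        right
        refine ⟨?_, by simp [hj'], by omega⟩
        simp only [blockIndex, hi', hj', hmin, hlast, Fin.val_zero, Nat.zero_min, Nat.cast_zero]
        ring
    · left
      have hj' : j' = 0 := by simp [j', blocks, hjm]
      refine ⟨?_, by simp [hj']⟩
      simp only [blockIndex, i', onesMod, if_true, hj', hmin, hlast, Fin.val_zero, Nat.zero_min,
        Nat.cast_zero]
      ring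

theorem potential_step_le (hmn : m ≤ n) (p : Fin m × Fin n) (a : Fin 2) :
    potential (((onesMod m).inter (blocks m n)).step p a) ≤ potential p + 1 := by
  obtain ⟨i, j⟩ := p
  simp only [inter_step, potential]
  rcases blockIndex_step hmn i j a with ⟨hk, hj⟩ | ⟨hk, hj, hjn⟩
  · rw [hk]; omega
  · rw [hk, hj]
    have hk : ((blockIndex i j + 1 : Fin m) : ℕ) ≤ blockIndex i j + 1 := by
      rw [Fin.val_add]
      exact (Nat.mod_le _ _).trans (by simp [Nat.mod_le])
    nlinarith

theorem potential_start : potential ((onesMod m).inter (blocks m n)).start = 0 := by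
  simp [potential, blockIndex, onesMod, blocks]

theorem potential_eq_of_mem_accept (hmn : m ≤ n) {p : Fin m × Fin n}
    (hp : p ∈ ((onesMod m).inter (blocks m n)).accept) :
    potential p = m * n - 1 := by
  obtain ⟨i, j⟩ := p
  obtain ⟨rfl, hj : (j : ℕ) = n - 1⟩ := hp
  have := NeZero.pos m
  have hk : (blockIndex (0 : Fin m) j : ℕ) = m - 1 := by
    rw [blockIndex, hj, min_eq_right (by omega), sub_zero, Fin.val_natCast,
      Nat.mod_eq_of_lt (by omega)]
  rw [potential, hk, hj, Nat.sub_one_mul_add_sub_one NeZero.one_le]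

theorem mul_sub_one_le_length_of_mem_accepts (hmn : m ≤ n) {x : List (Fin 2)}
    (h₁ : x ∈ (onesMod m).accepts) (h₂ : x ∈ (blocks m n).accepts) :
    m * n - 1 ≤ x.length := by
  have hx : x ∈ ((onesMod m).inter (blocks m n)).accepts := by
    rw [accepts_inter]
    exact ⟨h₁, h₂⟩
  calc m * n - 1 = potential (((onesMod m).inter (blocks m n)).eval x) :=
        (potential_eq_of_mem_accept hmn ((mem_accepts _).mp hx)).symm
    _ ≤ potential ((onesMod m).inter (blocks m n)).start + x.length :=
        potential_evalFrom_le _ potential (potential_step_le hmn) _ x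
    _ = x.length := by rw [potential_start, zero_add]

end product

def block (m n : ℕ) : List (Fin 2) :=
  List.replicate (m - 1) 1 ++ List.replicate (n - m) 0

def witness (m n : ℕ) : List (Fin 2) :=
  (List.replicate (m - 1) (block m n ++ [0])).flatten ++ block m n

theorem length_witness {m n : ℕ} (hm : 1 ≤ m) (hmn : m ≤ n) :
    (witness m n).length = m * n - 1 := by
  have hblock : (block m n).length = n - 1 := by simp [block]; omega
  simp only [witness, List.length_append, List.length_flatten, List.map_replicate,
    List.sum_replicate, hblock, List.length_singleton, smul_eq_mul]
  rw [Nat.sub_add_cancel (by omega), Nat.sub_one_mul_add_sub_one hm]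

theorem witness_mem_onesMod {m n : ℕ} [NeZero m] : witness m n ∈ (onesMod m).accepts := by
  show (onesMod m).evalFrom 0 (witness m n) = 0
  simp [onesMod_evalFrom, witness, block, List.count_flatten, List.count_replicate,
    natCast_pred_eq_neg_one]

theorem blocks_evalFrom_block {m n : ℕ} [NeZero m] [NeZero n] (hmn : m ≤ n) :
    ((blocks m n).evalFrom 0 (block m n) : ℕ) = n - 1 := by
  have := NeZero.pos m
  have hones : ((blocks m n).evalFrom 0 (List.replicate (m - 1) 1) : ℕ) = m - 1 := by
    simpa using blocks_evalFrom_replicate_one hmn 0 (m - 1) (by simp; omega)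
  rw [block, evalFrom_of_append, blocks_evalFrom_replicate_zero _ _ (by omega) (by omega), hones]
  omega

theorem witness_mem_blocks {m n : ℕ} [NeZero m] [NeZero n] (hmn : m ≤ n) :
    witness m n ∈ (blocks m n).accepts := by
  have hblock := blocks_evalFrom_block hmn
  have hcycle : (blocks m n).evalFrom 0 (block m n ++ [0]) = 0 := by
    rw [evalFrom_append_singleton, blocks_step_zero_of_succ_eq hmn (by omega)]
  show ((blocks m n).evalFrom 0 (witness m n) : ℕ) = n - 1
  rw [witness, evalFrom_of_append, evalFrom_flatten_replicate _ hcycle, hblock]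

end TightIntersection

open TightIntersection in
/-- For all `m, n ≥ 1` there exist DFAs over the two-letter alphabet with `m`
and `n` states respectively whose intersection is nonempty and whose shortest
common string has length exactly `m·n − 1`. -/
theorem dfa_intersection_shortest_string_tight (m n : ℕ) (hm : 1 ≤ m) (hn : 1 ≤ n) :
    ∃ (M₁ : DFA (Fin 2) (Fin m)) (M₂ : DFA (Fin 2) (Fin n)),
      (∃ x, x ∈ M₁.accepts ∧ x ∈ M₂.accepts ∧ x.length = m * n - 1) ∧
      (∀ x, x ∈ M₁.accepts → x ∈ M₂.accepts → m * n - 1 ≤ x.length) := by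
  wlog hmn : m ≤ n generalizing m n
  · obtain ⟨M₂, M₁, ⟨x, hx₂, hx₁, hx⟩, hmin⟩ := this n m hn hm (by omega)
    rw [mul_comm] at hx hmin
    exact ⟨M₁, M₂, ⟨x, hx₁, hx₂, hx⟩, fun x h₁ h₂ => hmin x h₂ h₁⟩
  have : NeZero m := ⟨by omega⟩
  have : NeZero n := ⟨by omega⟩
  exact ⟨onesMod m, blocks m n,
    ⟨witness m n, witness_mem_onesMod, witness_mem_blocks hmn, length_witness hm hmn⟩,
    fun x => mul_sub_one_le_length_of_mem_accepts hmn⟩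
end

section
/- Define F(m,n) = max over 1 ≤ i ≤ m and 1 ≤ j ≤ n of ( max(m−i, n−j) + lcm(i,j) ). If M₁ and M₂ are DFAs over a one-letter alphabet with m and n states respectively, accepting L₁ and L₂, and L₁ ∩ L₂ is nonempty, then the shortest string in L₁ ∩ L₂ has length at most F(m,n) − 1. -/
/-!
A unary DFA with `m` states is a map `q ↦ δ(q, 0)` on `m` points, so the run from the start
state enters a cycle of some length `i` after a preperiod `a` with `a + i ≤ m`; from then on
acceptance of `0^ℓ` depends only on `ℓ mod i`. For two automata with cycle lengths `i` and `j`,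
any common accepted length `ℓ ≥ max(m - i, n - j) + lcm(i, j)` can therefore be shortened by
`lcm(i, j)`, so the shortest common one is below `F(m, n)`.
-/

/-- `F(m,n) = max_{1 ≤ i ≤ m, 1 ≤ j ≤ n} ( max(m−i, n−j) + lcm(i,j) )`. -/
def pighizziniShallitF (m n : ℕ) : ℕ :=
  (Finset.Icc 1 m ×ˢ Finset.Icc 1 n).sup
    fun p => max (m - p.1) (n - p.2) + Nat.lcm p.1 p.2

theorem le_pighizziniShallitF {m n i j : ℕ} (hi : 0 < i) (him : i ≤ m) (hj : 0 < j)
    (hjn : j ≤ n) : max (m - i) (n - j) + Nat.lcm i j ≤ pighizziniShallitF m n :=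
  Finset.le_sup (f := fun p : ℕ × ℕ => max (m - p.1) (n - p.2) + Nat.lcm p.1 p.2)
    (b := (i, j))
    (Finset.mem_product.mpr ⟨Finset.mem_Icc.mpr ⟨hi, him⟩, Finset.mem_Icc.mpr ⟨hj, hjn⟩⟩)

namespace Function

variable {σ : Type*}

theorem exists_isPeriodicPt_iterate_of_add_le_card [Fintype σ] (f : σ → σ) (s : σ) :
    ∃ a i, 0 < i ∧ a + i ≤ Fintype.card σ ∧ IsPeriodicPt f i (f^[a] s) := by
  obtain ⟨x, y, hne, heq⟩ := Fintype.exists_ne_map_eq_of_card_lt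
    (fun k : Fin (Fintype.card σ + 1) => f^[k] s) (by simp)
  wlog hlt : x < y generalizing x y
  · exact this y x hne.symm heq.symm (hne.symm.lt_of_le (not_lt.mp hlt))
  refine ⟨x, y - x, by omega, by omega, ?_⟩
  show f^[y - x] (f^[x] s) = f^[x] s
  rw [← iterate_add_apply, Nat.sub_add_cancel hlt.le]
  exact heq.symm

theorem IsPeriodicPt.iterate_sub_eq_iterate {f : σ → σ} {s : σ} {a i L ℓ : ℕ}
    (h : IsPeriodicPt f i (f^[a] s)) (hiL : i ∣ L) (hℓ : a + L ≤ ℓ) :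
    f^[ℓ - L] s = f^[ℓ] s := by
  have hper : IsPeriodicPt f L (f^[ℓ - L] s) := by
    rw [← Nat.sub_add_cancel (show a ≤ ℓ - L by omega), iterate_add_apply]
    exact (h.apply_iterate _).trans_dvd hiL
  calc f^[ℓ - L] s = f^[L] (f^[ℓ - L] s) := hper.eq.symm
    _ = f^[ℓ] s := by rw [← iterate_add_apply, Nat.add_sub_cancel' (by omega)]

end Function

namespace DFA

variable {α σ : Type*}

theorem evalFrom_replicate (M : DFA α σ) (c : α) (n : ℕ) (s : σ) :
    M.evalFrom s (List.replicate n c) = (M.step · c)^[n] s := by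
  induction n generalizing s with
  | zero => rfl
  | succ n ih => exact ih (M.step s c)

theorem exists_replicate_sub_mem_accepts_iff [Fintype σ] (M : DFA α σ) (c : α) :
    ∃ a i, 0 < i ∧ a + i ≤ Fintype.card σ ∧ ∀ L ℓ, i ∣ L → a + L ≤ ℓ →
      (List.replicate (ℓ - L) c ∈ M.accepts ↔ List.replicate ℓ c ∈ M.accepts) := by
  obtain ⟨a, i, hi, hai, hper⟩ :=
    Function.exists_isPeriodicPt_iterate_of_add_le_card (M.step · c) M.start
  refine ⟨a, i, hi, hai, fun L ℓ hiL hℓ => ?_⟩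
  simp only [mem_accepts, eval, evalFrom_replicate, hper.iterate_sub_eq_iterate hiL hℓ]

end DFA

/-- For unary DFAs with `m` and `n` states whose languages intersect
nontrivially, the shortest string in the intersection has length at most
`F(m,n) − 1`. -/
theorem unary_dfa_intersection_shortest_string {σ₁ σ₂ : Type*}
    [Fintype σ₁] [Fintype σ₂] (M₁ : DFA (Fin 1) σ₁) (M₂ : DFA (Fin 1) σ₂)
    (h : ∃ x, x ∈ M₁.accepts ∧ x ∈ M₂.accepts) :
    ∃ x, x ∈ M₁.accepts ∧ x ∈ M₂.accepts ∧
      x.length ≤ pighizziniShallitF (Fintype.card σ₁) (Fintype.card σ₂) - 1 := by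
  classical
  have hex : ∃ ℓ, List.replicate ℓ 0 ∈ M₁.accepts ∧ List.replicate ℓ 0 ∈ M₂.accepts := by
    obtain ⟨x, hx₁, hx₂⟩ := h
    have hx : x = List.replicate x.length 0 :=
      List.eq_replicate_length.mpr fun _ _ => Subsingleton.elim _ _
    exact ⟨x.length, hx ▸ hx₁, hx ▸ hx₂⟩
  obtain ⟨acc₁, acc₂⟩ := Nat.find_spec hex
  refine ⟨_, acc₁, acc₂, ?_⟩
  obtain ⟨a₁, i, hi, hai, per₁⟩ := M₁.exists_replicate_sub_mem_accepts_iff 0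
  obtain ⟨a₂, j, hj, haj, per₂⟩ := M₂.exists_replicate_sub_mem_accepts_iff 0
  have hF := le_pighizziniShallitF hi (by omega : i ≤ Fintype.card σ₁) hj
    (by omega : j ≤ Fintype.card σ₂)
  have hL : 0 < Nat.lcm i j := Nat.lcm_pos hi hj
  rw [List.length_replicate]
  by_contra! hlong
  exact Nat.find_min hex (m := Nat.find hex - Nat.lcm i j) (by omega)
    ⟨(per₁ _ _ (Nat.dvd_lcm_left i j) (by omega)).2 acc₁,
      (per₂ _ _ (Nat.dvd_lcm_right i j) (by omega)).2 acc₂⟩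
end

section
/- Define F(m,n) = max over 1 ≤ i ≤ m and 1 ≤ j ≤ n of ( max(m−i, n−j) + lcm(i,j) ). For all m, n ≥ 1 there exist DFAs M₁ and M₂ over a one-letter alphabet, with exactly m and n states respectively, such that L(M₁) ∩ L(M₂) is nonempty and the shortest string in L(M₁) ∩ L(M₂) has length exactly F(m,n) − 1. -/
theorem Nat.add_sub_one_le_of_modEq {s K L : ℕ} (hs : s ≤ L) (h : L ≡ s + K - 1 [MOD K]) :
    s + K - 1 ≤ L := by
  by_contra! hlt
  have hK : K ∣ s + K - 1 - L := (Nat.modEq_iff_dvd' hlt.le).mp h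
  have := Nat.le_of_dvd (by omega) hK
  omega

section TailCycle

variable {a p : ℕ}

/-- The state reached after reading `L` letters in the rho-shaped automaton with tail states
`0, …, a - 1` and cycle states `a, …, a + p - 1`. -/
def tailCycleState (a p L : ℕ) : ℕ := if L < a then L else a + (L - a) % p

lemma tailCycleState_lt (hp : 0 < p) (L : ℕ) : tailCycleState a p L < a + p := by
  unfold tailCycleState
  split
  · omega
  · have := Nat.mod_lt (L - a) hp
    omega

lemma tailCycleState_zero : tailCycleState a p 0 = 0 := by
  unfold tailCycleState
  split <;> simp_all

lemma tailCycleState_tailCycleState_add_one (L : ℕ) :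
    tailCycleState a p (tailCycleState a p L + 1) = tailCycleState a p (L + 1) := by
  unfold tailCycleState
  by_cases hL : L < a
  · simp [hL]
  · rw [if_neg hL, if_neg (by omega), if_neg (by omega),
      show a + (L - a) % p + 1 - a = (L - a) % p + 1 by omega, Nat.mod_add_mod,
      show L + 1 - a = L - a + 1 by omega]

lemma tailCycleState_eq_iff {L N : ℕ} (hN : a ≤ N) :
    tailCycleState a p L = tailCycleState a p N ↔ a ≤ L ∧ L ≡ N [MOD p] := by
  unfold tailCycleState
  rw [if_neg (show ¬N < a by omega)]
  by_cases hL : L < a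
  · rw [if_pos hL]
    omega
  · rw [if_neg hL, Nat.add_left_cancel_iff, and_iff_right (by omega)]
    exact ⟨fun h => by simpa [Nat.sub_add_cancel hN, Nat.sub_add_cancel (not_lt.1 hL)]
      using Nat.ModEq.add_right a h, Nat.ModEq.sub_right (not_lt.1 hL) hN⟩

def tailCycleDFA (α : Type*) (a p N : ℕ) (hp : 0 < p) : DFA α (Fin (a + p)) where
  step s _ := ⟨tailCycleState a p (s + 1), tailCycleState_lt hp _⟩
  start := ⟨0, by omega⟩
  accept := {⟨tailCycleState a p N, tailCycleState_lt hp _⟩}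

variable {α : Type*} {N : ℕ} {hp : 0 < p}

lemma tailCycleDFA_eval (x : List α) :
    ((tailCycleDFA α a p N hp).eval x : ℕ) = tailCycleState a p x.length := by
  induction x using List.reverseRecOn with
  | nil => simp [tailCycleDFA, tailCycleState_zero]
  | append_singleton x c ih =>
    rw [DFA.eval_append_singleton, List.length_append, List.length_singleton,
      ← tailCycleState_tailCycleState_add_one, ← ih]
    rfl

lemma mem_tailCycleDFA_accepts (hN : a ≤ N) {x : List α} :
    x ∈ (tailCycleDFA α a p N hp).accepts ↔ a ≤ x.length ∧ x.length ≡ N [MOD p] := by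
  rw [DFA.mem_accepts, ← tailCycleState_eq_iff hN, ← tailCycleDFA_eval (N := N) (hp := hp)]
  simp [tailCycleDFA, Fin.ext_iff]

end TailCycle

/-- For all `m, n ≥ 1` there exist unary DFAs with `m` and `n` states whose
languages intersect nontrivially and whose shortest common string has length
exactly `F(m,n) − 1`. -/
theorem unary_dfa_intersection_shortest_string_tight (m n : ℕ)
    (hm : 1 ≤ m) (hn : 1 ≤ n) :
    ∃ (M₁ : DFA (Fin 1) (Fin m)) (M₂ : DFA (Fin 1) (Fin n)),
      (∃ x, x ∈ M₁.accepts ∧ x ∈ M₂.accepts ∧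
        x.length = pighizziniShallitF m n - 1) ∧
      (∀ x, x ∈ M₁.accepts → x ∈ M₂.accepts →
        pighizziniShallitF m n - 1 ≤ x.length) := by
  obtain ⟨⟨i, j⟩, hij, hF⟩ := Finset.exists_mem_eq_sup (Finset.Icc 1 m ×ˢ Finset.Icc 1 n)
    ⟨(1, 1), by simp [hm, hn]⟩
    fun p : ℕ × ℕ => max (m - p.1) (n - p.2) + Nat.lcm p.1 p.2
  simp only [Finset.mem_product, Finset.mem_Icc] at hij
  obtain ⟨⟨hi, him⟩, hj, hjn⟩ := hij
  set N := max (m - i) (n - j) + Nat.lcm i j - 1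
  have hFN : pighizziniShallitF m n - 1 = N := by rw [pighizziniShallitF, hF]
  have hlcm : 0 < Nat.lcm i j := Nat.lcm_pos hi hj
  let M₁ := (tailCycleDFA (Fin 1) (m - i) i N hi).reindex (finCongr (Nat.sub_add_cancel him))
  let M₂ := (tailCycleDFA (Fin 1) (n - j) j N hj).reindex (finCongr (Nat.sub_add_cancel hjn))
  have mem₁ (x) : x ∈ M₁.accepts ↔ m - i ≤ x.length ∧ x.length ≡ N [MOD i] := by
    rw [DFA.accepts_reindex, mem_tailCycleDFA_accepts (by omega)]
  have mem₂ (x) : x ∈ M₂.accepts ↔ n - j ≤ x.length ∧ x.length ≡ N [MOD j] := by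
    rw [DFA.accepts_reindex, mem_tailCycleDFA_accepts (by omega)]
  refine ⟨M₁, M₂, ⟨List.replicate N 0, ?_, ?_, by rw [List.length_replicate, hFN]⟩,
    fun x hx₁ hx₂ => ?_⟩
  · rw [mem₁, List.length_replicate]
    exact ⟨by omega, .rfl⟩
  · rw [mem₂, List.length_replicate]
    exact ⟨by omega, .rfl⟩
  · obtain ⟨hle₁, hmod₁⟩ := (mem₁ x).1 hx₁
    obtain ⟨hle₂, hmod₂⟩ := (mem₂ x).1 hx₂
    exact hFN ▸ Nat.add_sub_one_le_of_modEq (max_le hle₁ hle₂) (Nat.mod_lcm hmod₁ hmod₂)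
end

section
/- Let L₁ be accepted by an NFA with m states and L₂ be accepted by an NFA with n states, over the same alphabet. If L₁⁺ ∩ L₂⁺ is nonempty, then L₁⁺ ∩ L₂⁺ contains a string of length at most m·n − 1. -/
/-- The positive closure `L⁺ = ⋃_{k ≥ 1} L^k` of a language. -/
def posClosure {α : Type*} (L : Language α) : Language α :=
  {x | ∃ k : ℕ, 1 ≤ k ∧ x ∈ L ^ k}

/-!
`L⁺` is accepted by an NFA on the same states as an NFA `M` for `L`: every accepting state
additionally gets the transitions leaving the start states of `M`. The product of two such
automata accepts `L₁⁺ ∩ L₂⁺` with `m·n` states, and an accepted word whose length reaches the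
number of states passes twice through some state, so the loop in between can be cut out.
-/

open Set Computability

theorem posClosure_eq_mul_kstar {α : Type*} (L : Language α) : posClosure L = L * L∗ := by
  ext x
  simp only [Language.kstar_eq_iSup_pow, Language.mul_iSup, Language.mem_iSup, ← pow_succ']
  constructor
  · rintro ⟨k, hk, hx⟩
    obtain ⟨i, rfl⟩ := Nat.exists_eq_add_of_le' hk
    exact ⟨i, hx⟩
  · rintro ⟨i, hx⟩
    exact ⟨i + 1, by omega, hx⟩

namespace NFA

variable {α σ σ₁ σ₂ : Type*}

theorem evalFrom_mono {M : NFA α σ} {S T : Set σ} (h : S ⊆ T) (x : List α) :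
    M.evalFrom S x ⊆ M.evalFrom T x := by
  rw [← union_eq_right.2 h, evalFrom_union]
  exact subset_union_left

theorem acceptsFrom_mono {M : NFA α σ} {S T : Set σ} (h : S ⊆ T) :
    M.acceptsFrom S ≤ M.acceptsFrom T :=
  fun x ⟨s, hs, hx⟩ => ⟨s, hs, evalFrom_mono h x hx⟩

theorem mem_acceptsFrom_iff_exists {M : NFA α σ} {S : Set σ} {x : List α} :
    x ∈ M.acceptsFrom S ↔ ∃ s ∈ S, x ∈ M.acceptsFrom {s} := by
  simp only [mem_acceptsFrom, mem_evalFrom_iff_exists (S := S)]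
  tauto

theorem evalFrom_subset_of_step_subset {M N : NFA α σ} (h : ∀ s a, M.step s a ⊆ N.step s a)
    (S : Set σ) (x : List α) : M.evalFrom S x ⊆ N.evalFrom S x := by
  induction x generalizing S with
  | nil => exact subset_rfl
  | cons a x ih =>
    have hstep : M.stepSet S a ⊆ N.stepSet S a := fun u hu => by
      obtain ⟨s, hs, hu⟩ := mem_stepSet.1 hu
      exact mem_stepSet.2 ⟨s, hs, h s a hu⟩
    exact (evalFrom_mono hstep x).trans (ih _)

theorem exists_mem_acceptsFrom_length_lt_of_card_le [Fintype σ] {M : NFA α σ} {S : Set σ}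
    {x : List α} (hx : x ∈ M.acceptsFrom S) (hlen : Fintype.card σ ≤ x.length) :
    ∃ y ∈ M.acceptsFrom S, y.length < x.length := by
  have hsplit : ∀ i : Fin (x.length + 1),
      ∃ q ∈ M.evalFrom S (x.take i), x.drop i ∈ M.acceptsFrom {q} := by
    intro i
    rw [← List.take_append_drop i x, append_mem_acceptsFrom, mem_acceptsFrom_iff_exists] at hx
    exact hx
  choose q hq_eval hq_accepts using hsplit
  obtain ⟨i, j, hij, hqij⟩ := Fintype.exists_ne_map_eq_of_card_lt q (by simp; omega)
  wlog hlt : i < j generalizing i j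
  · exact this j i hij.symm hqij.symm (lt_of_le_of_ne (not_lt.1 hlt) hij.symm)
  refine ⟨x.take i ++ x.drop j, ?_, ?_⟩
  · rw [append_mem_acceptsFrom, mem_acceptsFrom_iff_exists]
    exact ⟨q i, hq_eval i, hqij ▸ hq_accepts j⟩
  · have := j.isLt
    simp only [List.length_append, List.length_take, List.length_drop]
    omega

theorem exists_mem_acceptsFrom_length_lt_card [Fintype σ] {M : NFA α σ} {S : Set σ}
    {x : List α} (hx : x ∈ M.acceptsFrom S) :
    ∃ y ∈ M.acceptsFrom S, y.length < Fintype.card σ := by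
  by_cases hlen : Fintype.card σ ≤ x.length
  · obtain ⟨y, hy, hlt⟩ := exists_mem_acceptsFrom_length_lt_of_card_le hx hlen
    exact exists_mem_acceptsFrom_length_lt_card hy
  · exact ⟨x, hx, not_le.1 hlen⟩
termination_by x.length

def plus (M : NFA α σ) : NFA α σ where
  step s a := M.step s a ∪ {u | s ∈ M.accept ∧ u ∈ M.stepSet M.start a}
  start := M.start
  accept := M.accept

section plus

variable {M : NFA α σ}

theorem evalFrom_subset_plus_evalFrom (S : Set σ) (x : List α) :
    M.evalFrom S x ⊆ M.plus.evalFrom S x :=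
  evalFrom_subset_of_step_subset (fun _ _ => subset_union_left) S x

theorem eval_subset_plus_evalFrom_of_mem_accept {t : σ} (ht : t ∈ M.accept) (a : α)
    (x : List α) : M.eval (a :: x) ⊆ M.plus.evalFrom {t} (a :: x) := by
  calc M.eval (a :: x) = M.evalFrom (M.stepSet M.start a) x := rfl
    _ ⊆ M.plus.evalFrom (M.stepSet M.start a) x := evalFrom_subset_plus_evalFrom _ x
    _ ⊆ M.plus.evalFrom {t} (a :: x) := by
      rw [evalFrom_cons, stepSet_singleton]
      exact evalFrom_mono (fun u hu => Or.inr ⟨ht, hu⟩) x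

theorem mem_plus_acceptsFrom_of_mem_kstar {t : σ} (ht : t ∈ M.accept) {z : List α}
    (hz : z ∈ M.accepts∗) : z ∈ M.plus.acceptsFrom {t} := by
  obtain ⟨ws, rfl, hws⟩ := Language.mem_kstar.1 hz
  clear hz
  induction ws generalizing t with
  | nil => exact (nil_mem_acceptsFrom _).2 ⟨t, rfl, ht⟩
  | cons w ws ih =>
    obtain ⟨t', ht', hw⟩ : ∃ t' ∈ M.accept, t' ∈ M.plus.evalFrom {t} w := by
      obtain ⟨t', ht', hw⟩ := hws w List.mem_cons_self
      cases w with
      | nil => exact ⟨t, ht, rfl⟩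
      | cons a w => exact ⟨t', ht', eval_subset_plus_evalFrom_of_mem_accept ht a w hw⟩
    rw [List.flatten_cons, append_mem_acceptsFrom]
    exact acceptsFrom_mono (singleton_subset_iff.2 hw)
      (ih ht' fun y hy => hws y (List.mem_cons_of_mem w hy))

theorem mem_mul_kstar_of_mem_plus_acceptsFrom {s : σ} {x : List α}
    (hx : x ∈ M.plus.acceptsFrom {s}) : x ∈ M.acceptsFrom {s} * M.accepts∗ := by
  induction x generalizing s with
  | nil => exact ⟨[], hx, [], Language.nil_mem_kstar _, rfl⟩
  | cons a x ih =>
    rw [cons_mem_acceptsFrom, stepSet_singleton, mem_acceptsFrom_iff_exists] at hx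
    obtain ⟨u, hu, hx⟩ := hx
    obtain ⟨y, hy, z, hz, rfl⟩ := Language.mem_mul.1 (ih hx)
    rcases hu with hu | ⟨hs, hu⟩
    · have hay : a :: y ∈ M.acceptsFrom {s} := by
        rw [cons_mem_acceptsFrom, stepSet_singleton]
        exact acceptsFrom_mono (singleton_subset_iff.2 hu) hy
      exact Language.append_mem_mul hay hz
    · have hay : a :: y ∈ M.accepts := by
        rw [accepts_eq_acceptsFrom_start, cons_mem_acceptsFrom]
        exact acceptsFrom_mono (singleton_subset_iff.2 hu) hy
      have hayz : a :: y ++ z ∈ M.accepts∗ := by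
        rw [← Language.one_add_self_mul_kstar_eq_kstar]
        exact Or.inr (Language.append_mem_mul hay hz)
      have hnil : [] ∈ M.acceptsFrom {s} := (nil_mem_acceptsFrom _).2 ⟨s, rfl, hs⟩
      exact Language.append_mem_mul hnil hayz

theorem accepts_plus : M.plus.accepts = M.accepts * M.accepts∗ := by
  refine Language.ext fun x => ⟨fun hx => ?_, fun hx => ?_⟩
  · rw [accepts_eq_acceptsFrom_start, mem_acceptsFrom_iff_exists] at hx
    obtain ⟨s, hs, hx⟩ := hx
    obtain ⟨y, hy, z, hz, rfl⟩ := Language.mem_mul.1 (mem_mul_kstar_of_mem_plus_acceptsFrom hx)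
    exact Language.append_mem_mul (acceptsFrom_mono (singleton_subset_iff.2 hs) hy) hz
  · obtain ⟨y, ⟨t, ht, hy⟩, z, hz, rfl⟩ := Language.mem_mul.1 hx
    rw [accepts_eq_acceptsFrom_start, append_mem_acceptsFrom]
    exact acceptsFrom_mono (singleton_subset_iff.2 (evalFrom_subset_plus_evalFrom _ y hy))
      (mem_plus_acceptsFrom_of_mem_kstar ht hz)

end plus

def inter (M₁ : NFA α σ₁) (M₂ : NFA α σ₂) : NFA α (σ₁ × σ₂) where
  step p a := M₁.step p.1 a ×ˢ M₂.step p.2 a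
  start := M₁.start ×ˢ M₂.start
  accept := M₁.accept ×ˢ M₂.accept

section inter

variable (M₁ : NFA α σ₁) (M₂ : NFA α σ₂)

theorem inter_evalFrom (S₁ : Set σ₁) (S₂ : Set σ₂) (x : List α) :
    (M₁.inter M₂).evalFrom (S₁ ×ˢ S₂) x = M₁.evalFrom S₁ x ×ˢ M₂.evalFrom S₂ x := by
  induction x generalizing S₁ S₂ with
  | nil => rfl
  | cons a x ih =>
    have hstep : (M₁.inter M₂).stepSet (S₁ ×ˢ S₂) a = M₁.stepSet S₁ a ×ˢ M₂.stepSet S₂ a := by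
      ext ⟨u₁, u₂⟩
      simp only [mem_stepSet, inter, mem_prod, Prod.exists]
      tauto
    rw [evalFrom_cons, hstep, ih]
    rfl

theorem accepts_inter : (M₁.inter M₂).accepts = M₁.accepts ⊓ M₂.accepts := by
  ext x
  simp only [mem_accepts, Language.mem_inf]
  rw [show (M₁.inter M₂).start = M₁.start ×ˢ M₂.start from rfl, inter_evalFrom]
  simp only [inter, mem_prod, Prod.exists]
  tauto

end inter

end NFA

/-- If `L₁` is accepted by an NFA with `m` states and `L₂` by an NFA with `n`
states, and `L₁⁺ ∩ L₂⁺` is nonempty, then `L₁⁺ ∩ L₂⁺` contains a string of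
length at most `m·n − 1`. -/
theorem nfa_posClosure_intersection_shortest_string {α σ₁ σ₂ : Type*}
    [Fintype σ₁] [Fintype σ₂] (M₁ : NFA α σ₁) (M₂ : NFA α σ₂)
    (h : ∃ x, x ∈ posClosure M₁.accepts ∧ x ∈ posClosure M₂.accepts) :
    ∃ x, x ∈ posClosure M₁.accepts ∧ x ∈ posClosure M₂.accepts ∧
      x.length ≤ Fintype.card σ₁ * Fintype.card σ₂ - 1 := by
  simp only [posClosure_eq_mul_kstar, ← NFA.accepts_plus] at h ⊢
  obtain ⟨x, hx₁, hx₂⟩ := h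
  have hx : x ∈ (M₁.plus.inter M₂.plus).accepts := by
    rw [NFA.accepts_inter]
    exact ⟨hx₁, hx₂⟩
  obtain ⟨y, hy, hylen⟩ := NFA.exists_mem_acceptsFrom_length_lt_card hx
  rw [← NFA.accepts_eq_acceptsFrom_start, NFA.accepts_inter] at hy
  rw [Fintype.card_prod] at hylen
  exact ⟨y, hy.1, hy.2, by omega⟩
end

section
/- For all integers m ≥ n ≥ 1 there exist an NFA M₁ with m states accepting L₁ and an NFA M₂ with n states accepting L₂, over the two-letter alphabet {0,1}, such that L₁⁺ ∩ L₂⁺ is nonempty and every string in L₁⁺ ∩ L₂⁺ has length at least (m−1)·n. -/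
variable {α : Type*}

theorem mem_posClosure_singleton {w x : List α} :
    x ∈ posClosure {w} ↔ ∃ k, 1 ≤ k ∧ x = (List.replicate k w).flatten := by
  simp only [posClosure, Language.mem_pow]
  constructor
  · rintro ⟨k, hk, S, rfl, hS, hSw⟩
    exact ⟨k, hk, congrArg List.flatten (List.eq_replicate_iff.2 ⟨hS, hSw⟩)⟩
  · rintro ⟨k, hk, rfl⟩
    exact ⟨k, hk, _, rfl, List.length_replicate, fun _ => List.eq_of_mem_replicate⟩

theorem dvd_count_of_mem_posClosure [DecidableEq α] {L : Language α} {a : α} {n : ℕ}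
    (hL : ∀ y ∈ L, n ∣ y.count a) {x : List α} (hx : x ∈ posClosure L) : n ∣ x.count a := by
  obtain ⟨k, -, hk⟩ := hx
  obtain ⟨S, rfl, -, hS⟩ := Language.mem_pow.1 hk
  rw [List.count_flatten]
  refine List.dvd_sum fun c hc => ?_
  obtain ⟨y, hy, rfl⟩ := List.mem_map.1 hc
  exact hL y (hS y hy)

theorem count_flatten_replicate [DecidableEq α] (a : α) (k : ℕ) (w : List α) :
    (List.replicate k w).flatten.count a = k * w.count a := by
  simp [List.count_flatten]

theorem length_flatten_replicate (k : ℕ) (w : List α) :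
    (List.replicate k w).flatten.length = k * w.length := by
  simp

theorem append_singleton_prefix_iff {x w : List α} {a : α} :
    x ++ [a] <+: w ↔ x <+: w ∧ w[x.length]? = some a := by
  constructor
  · rintro ⟨t, rfl⟩
    exact ⟨(List.prefix_append _ _).trans (List.prefix_append _ _), by simp⟩
  · rintro ⟨⟨_ | ⟨b, t⟩, rfl⟩, h⟩
    · simp at h
    · obtain rfl : b = a := by simpa using h
      exact ⟨t, by simp⟩

def wordNFA (w : List α) (m : ℕ) : NFA α (Fin m) where
  step i a := {j | (j : ℕ) = i + 1 ∧ w[(i : ℕ)]? = some a}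
  start := {i | (i : ℕ) = 0}
  accept := {i | (i : ℕ) = w.length}

theorem mem_eval_wordNFA {w x : List α} {m : ℕ} {j : Fin m} :
    j ∈ (wordNFA w m).eval x ↔ (j : ℕ) = x.length ∧ x <+: w := by
  induction x using List.reverseRecOn generalizing j with
  | nil => simp [NFA.eval, wordNFA]
  | append_singleton x a ih =>
    rw [NFA.eval_append_singleton, NFA.mem_stepSet, append_singleton_prefix_iff,
      List.length_append, List.length_singleton]
    constructor
    · rintro ⟨i, hi, hj, ha⟩
      rw [ih] at hi
      rw [← hi.1]
      exact ⟨hj, hi.2, ha⟩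
    · rintro ⟨hj, hx, ha⟩
      exact ⟨⟨x.length, by omega⟩, ih.2 ⟨rfl, hx⟩, hj, ha⟩

theorem wordNFA_accepts {w : List α} {m : ℕ} (hw : w.length < m) :
    (wordNFA w m).accepts = {w} := by
  ext x
  rw [NFA.mem_accepts]
  change _ ↔ x = w
  constructor
  · rintro ⟨j, hj, hjx⟩
    obtain ⟨hj', hx⟩ := mem_eval_wordNFA.1 hjx
    exact hx.eq_of_length (hj'.symm.trans hj)
  · rintro rfl
    exact ⟨⟨_, hw⟩, rfl, mem_eval_wordNFA.2 ⟨rfl, List.prefix_rfl⟩⟩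

section
open Fin.NatCast

def countModDFA [DecidableEq α] (a : α) (n : ℕ) [NeZero n] : DFA α (Fin n) where
  step i b := if b = a then i + 1 else i
  start := 0
  accept := {0}

theorem countModDFA_evalFrom [DecidableEq α] (a : α) (n : ℕ) [NeZero n] (s : Fin n)
    (x : List α) : (countModDFA a n).evalFrom s x = s + (x.count a : Fin n) := by
  induction x generalizing s with
  | nil => simp
  | cons b x ih =>
    rw [DFA.evalFrom_cons, ih, List.count_cons]
    by_cases hb : b = a
    · simp only [countModDFA, hb, ↓reduceIte, BEq.rfl, Nat.cast_add, Nat.cast_one]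
      ac_rfl
    · simp [countModDFA, hb]

theorem mem_countModDFA_accepts [DecidableEq α] {a : α} {n : ℕ} [NeZero n] {x : List α} :
    x ∈ (countModDFA a n).accepts ↔ n ∣ x.count a := by
  rw [DFA.mem_accepts, DFA.eval, countModDFA_evalFrom]
  simp [countModDFA, Fin.natCast_eq_zero]

end

def oneThenZeros : ℕ → List (Fin 2)
  | 0 => []
  | k + 1 => 1 :: List.replicate k 0

theorem length_oneThenZeros (k : ℕ) : (oneThenZeros k).length = k := by
  cases k <;> simp [oneThenZeros]

theorem count_one_oneThenZeros_succ (k : ℕ) : (oneThenZeros (k + 1)).count 1 = 1 := by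
  simp [oneThenZeros, List.count_replicate]

/-- For all `m ≥ n ≥ 1` there exist NFAs over the two-letter alphabet with `m`
and `n` states respectively such that `L₁⁺ ∩ L₂⁺` is nonempty and every string
in `L₁⁺ ∩ L₂⁺` has length at least `(m−1)·n`. -/
theorem nfa_posClosure_intersection_lower_bound (m n : ℕ) (hn : 1 ≤ n) (hmn : n ≤ m) :
    ∃ (M₁ : NFA (Fin 2) (Fin m)) (M₂ : NFA (Fin 2) (Fin n)),
      (∃ x, x ∈ posClosure M₁.accepts ∧ x ∈ posClosure M₂.accepts) ∧
      (∀ x, x ∈ posClosure M₁.accepts → x ∈ posClosure M₂.accepts →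
        (m - 1) * n ≤ x.length) := by
  obtain ⟨k, rfl⟩ : ∃ k, m = k + 1 := ⟨m - 1, by omega⟩
  have : NeZero n := ⟨by omega⟩
  have hL₁ : (wordNFA (oneThenZeros k) (k + 1)).accepts = {oneThenZeros k} :=
    wordNFA_accepts (by simp [length_oneThenZeros])
  have hL₂ := DFA.toNFA_correct (countModDFA (1 : Fin 2) n)
  refine ⟨wordNFA (oneThenZeros k) (k + 1), (countModDFA 1 n).toNFA,
    ⟨(List.replicate n (oneThenZeros k)).flatten, ?_, ?_⟩, ?_⟩
  · rw [hL₁]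
    exact mem_posClosure_singleton.2 ⟨n, hn, rfl⟩
  · refine ⟨1, le_rfl, ?_⟩
    rw [pow_one, hL₂, mem_countModDFA_accepts, count_flatten_replicate]
    exact dvd_mul_right n _
  · intro x hx₁ hx₂
    rw [hL₁] at hx₁
    rw [hL₂] at hx₂
    obtain ⟨j, hj, rfl⟩ := mem_posClosure_singleton.1 hx₁
    have hdvd := dvd_count_of_mem_posClosure (fun _ => mem_countModDFA_accepts.1) hx₂
    rw [count_flatten_replicate] at hdvd
    rcases k with _ | k
    · simp
    · rw [count_one_oneThenZeros_succ, mul_one] at hdvd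
      rw [length_flatten_replicate, length_oneThenZeros, Nat.add_sub_cancel, mul_comm]
      exact Nat.mul_le_mul_right _ (Nat.le_of_dvd hj hdvd)
end

section
/- Define G'(m,n) = max over pairs (i,j) with 1 ≤ i ≤ m, 1 ≤ j ≤ n and (i,j) ≠ (m,n) of lcm(i,j). If M₁ and M₂ are NFAs over a one-letter alphabet with m and n states respectively, accepting L₁ and L₂, and L₁⁺ ∩ L₂⁺ is nonempty, then the shortest string in L₁⁺ ∩ L₂⁺ has length at most G'(m,n). -/
/-- `G'(m,n) = max_{1 ≤ i ≤ m, 1 ≤ j ≤ n, (i,j) ≠ (m,n)} lcm(i,j)`. -/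
def Gprime (m n : ℕ) : ℕ :=
  ((Finset.Icc 1 m ×ˢ Finset.Icc 1 n).erase (m, n)).sup
    fun p => Nat.lcm p.1 p.2

/-!
If the common word is empty there is nothing to prove. Otherwise both languages contain a
nonempty word, and cutting cycles out of an accepting run shows that the shortest nonempty
words have lengths `i ≤ m` and `j ≤ n`, where `i = m` forces the empty word into `L₁` (the
cycle cut out of a run of length `m` is the whole run), and likewise for `j = n`. So either
`lcm(i, j) ≤ G'(m, n)` is a common length of `L₁⁺` and `L₂⁺`, or the empty word is common.
-/

theorem Fintype.exists_lt_le_card_map_eq {β : Type*} [Fintype β] (f : ℕ → β) :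
    ∃ s t, s < t ∧ t ≤ Fintype.card β ∧ f s = f t := by
  obtain ⟨x, hx, y, hy, hxy, hf⟩ := Finset.exists_ne_map_eq_of_card_lt_of_maps_to
    (s := Finset.range (Fintype.card β + 1)) (t := Finset.univ) (by simp) (f := f)
    (fun _ _ => Finset.mem_coe.2 (Finset.mem_univ _))
  rw [Finset.mem_range] at hx hy
  rcases hxy.lt_or_gt with h | h
  · exact ⟨x, y, h, by omega, hf⟩
  · exact ⟨y, x, h, by omega, hf.symm⟩

namespace NFA

variable {α σ : Type*} (M : NFA α σ)

theorem mem_evalFrom_replicate_iff (S : Set σ) (a : α) (ℓ : ℕ) (q : σ) :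
    q ∈ M.evalFrom S (List.replicate ℓ a) ↔
      ∃ f : ℕ → σ, f 0 ∈ S ∧ (∀ i < ℓ, f (i + 1) ∈ M.step (f i) a) ∧ f ℓ = q := by
  induction ℓ generalizing q with
  | zero => exact ⟨fun hq => ⟨fun _ => q, hq, by simp, rfl⟩, by rintro ⟨f, h0, -, rfl⟩; exact h0⟩
  | succ ℓ ih =>
    rw [List.replicate_succ', evalFrom_append, evalFrom_singleton, mem_stepSet]
    constructor
    · rintro ⟨p, hp, hq⟩
      obtain ⟨f, h0, hstep, rfl⟩ := (ih p).1 hp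
      refine ⟨fun i => if i ≤ ℓ then f i else q, by simpa using h0, fun i hi => ?_, by simp⟩
      rcases (Nat.lt_succ_iff.1 hi).lt_or_eq with hi | rfl
      · simpa [hi.le, Nat.succ_le_of_lt hi] using hstep i hi
      · simpa using hq
    · rintro ⟨f, h0, hstep, rfl⟩
      exact ⟨f ℓ, (ih _).2 ⟨f, h0, fun i hi => hstep i (by omega), rfl⟩, hstep ℓ ℓ.lt_succ_self⟩

theorem replicate_mem_accepts_iff (a : α) (ℓ : ℕ) :
    List.replicate ℓ a ∈ M.accepts ↔
      ∃ f : ℕ → σ, f 0 ∈ M.start ∧ (∀ i < ℓ, f (i + 1) ∈ M.step (f i) a) ∧ f ℓ ∈ M.accept := by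
  simp only [mem_accepts, mem_evalFrom_replicate_iff]
  constructor
  · rintro ⟨q, hq, f, h0, hstep, rfl⟩
    exact ⟨f, h0, hstep, hq⟩
  · rintro ⟨f, h0, hstep, hacc⟩
    exact ⟨f ℓ, hacc, f, h0, hstep, rfl⟩

theorem exists_replicate_sub_mem_accepts [Fintype σ] {a : α} {ℓ : ℕ}
    (h : List.replicate ℓ a ∈ M.accepts) (hℓ : Fintype.card σ ≤ ℓ) :
    ∃ c, 0 < c ∧ c ≤ Fintype.card σ ∧ List.replicate (ℓ - c) a ∈ M.accepts := by
  obtain ⟨f, h0, hstep, hacc⟩ := (M.replicate_mem_accepts_iff a ℓ).1 h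
  obtain ⟨s, t, hst, ht, hf⟩ := Fintype.exists_lt_le_card_map_eq f
  obtain ⟨g, hlow, hhigh⟩ :
      ∃ g : ℕ → σ, (∀ i ≤ s, g i = f i) ∧ ∀ i ≥ s, g i = f (i + (t - s)) := by
    refine ⟨fun i => if i < s then f i else f (i + (t - s)), fun i hi => ?_, fun i hi => ?_⟩
    · rcases hi.lt_or_eq with hi | rfl
      · simp [hi]
      · simp [hf, show i + (t - i) = t by omega]
    · simp [show ¬ i < s by omega]
  refine ⟨t - s, by omega, by omega, (M.replicate_mem_accepts_iff a _).2
    ⟨g, hlow 0 s.zero_le ▸ h0, fun i hi => ?_, ?_⟩⟩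
  · by_cases his : i < s
    · rw [hlow i his.le, hlow (i + 1) his]
      exact hstep i (by omega)
    · rw [hhigh i (by omega), hhigh (i + 1) (by omega),
        show i + 1 + (t - s) = i + (t - s) + 1 by omega]
      exact hstep _ (by omega)
  · rw [hhigh _ (by omega), show ℓ - (t - s) + (t - s) = ℓ by omega]
    exact hacc

theorem exists_replicate_mem_accepts_le_card [Unique α] [Fintype σ]
    (hM : ∃ w ∈ M.accepts, w ≠ []) :
    ∃ k, 0 < k ∧ k ≤ Fintype.card σ ∧ List.replicate k default ∈ M.accepts ∧
      (k = Fintype.card σ → [] ∈ M.accepts) := by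
  classical
  have h : ∃ ℓ, 0 < ℓ ∧ List.replicate ℓ default ∈ M.accepts := by
    obtain ⟨w, hw, hne⟩ := hM
    refine ⟨w.length, List.length_pos_iff.2 hne, ?_⟩
    rwa [← List.eq_replicate_length.2 fun b _ => Subsingleton.elim b default]
  obtain ⟨hk, hkM⟩ := Nat.find_spec h
  by_cases hlt : Nat.find h < Fintype.card σ
  · exact ⟨_, hk, hlt.le, hkM, fun heq => absurd heq hlt.ne⟩
  obtain ⟨c, hc, hcσ, hmem⟩ := M.exists_replicate_sub_mem_accepts hkM (not_lt.1 hlt)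
  have hcut : Nat.find h - c = 0 := by
    by_contra hne
    exact Nat.find_min h (show Nat.find h - c < Nat.find h by omega) ⟨by omega, hmem⟩
  exact ⟨_, hk, by omega, hkM, fun _ => by simpa [hcut] using hmem⟩

end NFA

section PosClosure

variable {α : Type*} {L : Language α}

theorem mem_posClosure_of_mem {w : List α} (h : w ∈ L) : w ∈ posClosure L :=
  ⟨1, le_rfl, by rwa [pow_one]⟩

theorem replicate_mem_posClosure_of_dvd {a : α} {n N : ℕ} (h : List.replicate n a ∈ L)
    (hn : n ∣ N) (hN : 0 < N) : List.replicate N a ∈ posClosure L := by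
  obtain ⟨k, rfl⟩ := hn
  refine ⟨k, Nat.pos_of_mul_pos_left hN, Language.mem_pow.2
    ⟨List.replicate k (List.replicate n a), by rw [List.flatten_replicate_replicate, mul_comm],
      by simp, fun y hy => ?_⟩⟩
  rwa [List.eq_of_mem_replicate hy]

theorem exists_ne_nil_mem_of_mem_posClosure {x : List α} (hx : x ∈ posClosure L) (hne : x ≠ []) :
    ∃ y ∈ L, y ≠ [] := by
  obtain ⟨k, -, hk⟩ := hx
  obtain ⟨S, rfl, -, hS⟩ := Language.mem_pow.1 hk
  by_contra! hnil
  exact hne (List.flatten_eq_nil_iff.2 fun y hy => hnil y (hS y hy))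

end PosClosure

theorem lcm_le_Gprime {m n i j : ℕ} (hi : 0 < i) (him : i ≤ m) (hj : 0 < j) (hjn : j ≤ n)
    (hne : (i, j) ≠ (m, n)) : Nat.lcm i j ≤ Gprime m n :=
  Finset.le_sup (f := fun p : ℕ × ℕ => Nat.lcm p.1 p.2) <|
    Finset.mem_erase.2 ⟨hne, Finset.mem_product.2
      ⟨Finset.mem_Icc.2 ⟨hi, him⟩, Finset.mem_Icc.2 ⟨hj, hjn⟩⟩⟩

/-- For unary NFAs with `m` and `n` states, if `L₁⁺ ∩ L₂⁺` is nonempty then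
the shortest string in `L₁⁺ ∩ L₂⁺` has length at most `G'(m,n)`. -/
theorem unary_nfa_posClosure_intersection_shortest_string {σ₁ σ₂ : Type*}
    [Fintype σ₁] [Fintype σ₂] (M₁ : NFA (Fin 1) σ₁) (M₂ : NFA (Fin 1) σ₂)
    (h : ∃ x, x ∈ posClosure M₁.accepts ∧ x ∈ posClosure M₂.accepts) :
    ∃ x, x ∈ posClosure M₁.accepts ∧ x ∈ posClosure M₂.accepts ∧
      x.length ≤ Gprime (Fintype.card σ₁) (Fintype.card σ₂) := by
  obtain ⟨x, hx₁, hx₂⟩ := h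
  rcases eq_or_ne x [] with rfl | hx
  · exact ⟨[], hx₁, hx₂, Nat.zero_le _⟩
  obtain ⟨i, hi, him, hi₁, hnil₁⟩ :=
    M₁.exists_replicate_mem_accepts_le_card (exists_ne_nil_mem_of_mem_posClosure hx₁ hx)
  obtain ⟨j, hj, hjn, hj₂, hnil₂⟩ :=
    M₂.exists_replicate_mem_accepts_le_card (exists_ne_nil_mem_of_mem_posClosure hx₂ hx)
  by_cases hmn : (i, j) = (Fintype.card σ₁, Fintype.card σ₂)
  · obtain ⟨rfl, rfl⟩ := Prod.mk.inj hmn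
    exact ⟨[], mem_posClosure_of_mem (hnil₁ rfl), mem_posClosure_of_mem (hnil₂ rfl), Nat.zero_le _⟩
  refine ⟨List.replicate (Nat.lcm i j) default, ?_, ?_, ?_⟩
  · exact replicate_mem_posClosure_of_dvd hi₁ (Nat.dvd_lcm_left i j) (Nat.lcm_pos hi hj)
  · exact replicate_mem_posClosure_of_dvd hj₂ (Nat.dvd_lcm_right i j) (Nat.lcm_pos hi hj)
  · simpa using lcm_le_Gprime hi him hj hjn hmn
end

section
/- Define G'(m,n) = max over pairs (i,j) with 1 ≤ i ≤ m, 1 ≤ j ≤ n and (i,j) ≠ (m,n) of lcm(i,j). For all m, n ≥ 1 there exist DFAs M₁ and M₂ over a one-letter alphabet, with exactly m and n states respectively, such that L(M₁)⁺ ∩ L(M₂)⁺ is nonempty and the shortest string in L(M₁)⁺ ∩ L(M₂)⁺ has length exactly G'(m,n). -/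
section Language

variable {α : Type*}

theorem posClosure_eq_self {L : Language α} (h : L * L ≤ L) : posClosure L = L := by
  have pow_le : ∀ k, 1 ≤ k → L ^ k ≤ L := by
    intro k hk
    induction k, hk using Nat.le_induction with
    | base => rw [pow_one]
    | succ k _ ih => exact (pow_succ L k).symm ▸ (mul_le_mul' ih le_rfl).trans h
  ext x
  exact ⟨fun ⟨k, hk, hx⟩ => pow_le k hk hx, fun hx => ⟨1, le_rfl, by rwa [pow_one]⟩⟩

def lengthLanguage (P : ℕ → Prop) : Language α :=
  {x | P x.length}

theorem mem_lengthLanguage {P : ℕ → Prop} {x : List α} : x ∈ lengthLanguage P ↔ P x.length :=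
  Iff.rfl

theorem lengthLanguage_mul_le {P : ℕ → Prop} (hP : ∀ a b, P a → P b → P (a + b)) :
    lengthLanguage P * lengthLanguage P ≤ (lengthLanguage P : Language α) := by
  rintro _ ⟨a, ha, b, hb, rfl⟩
  show P (a ++ b).length
  rw [List.length_append]
  exact hP _ _ ha hb

theorem posClosure_lengthLanguage {P : ℕ → Prop} (hP : ∀ a b, P a → P b → P (a + b)) :
    posClosure (lengthLanguage P) = (lengthLanguage P : Language α) :=
  posClosure_eq_self (lengthLanguage_mul_le hP)

end Language

section CounterDFA

variable {α : Type*} {s c r : ℕ}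

def counterDFA (s c r : ℕ) (hc : 0 < c) (hcs : c ≤ s) (hr : r < s) : DFA α (Fin s) where
  step q _ := ⟨(q + 1) % c, (Nat.mod_lt _ hc).trans_le hcs⟩
  start := ⟨r, hr⟩
  accept := {q | q.val = 0}

theorem counterDFA_evalFrom_cons (hc : 0 < c) (hcs : c ≤ s) (hr : r < s) (q : Fin s) (a : α)
    (x : List α) :
    ((counterDFA s c r hc hcs hr).evalFrom q (a :: x)).val = (q + x.length + 1) % c := by
  induction x generalizing q a with
  | nil => rfl
  | cons b x ih =>
    rw [DFA.evalFrom_cons, ih]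
    show ((q + 1) % c + x.length + 1) % c = (q + (x.length + 1) + 1) % c
    rw [add_assoc _ x.length, Nat.mod_add_mod, Nat.add_right_comm _ 1]

theorem mem_accepts_counterDFA (hc : 0 < c) (hcs : c ≤ s) (hr : r < s) (x : List α) :
    x ∈ (counterDFA s c r hc hcs hr).accepts ↔ c ∣ r + x.length ∧ (x = [] → r = 0) := by
  rw [DFA.mem_accepts, DFA.eval]
  cases x with
  | nil =>
    simp only [DFA.evalFrom_nil, List.length_nil, add_zero, forall_const]
    exact ⟨fun h => ⟨(show r = 0 from h) ▸ dvd_zero c, h⟩, And.right⟩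
  | cons a x =>
    simp only [reduceCtorEq, IsEmpty.forall_iff, and_true]
    show (_ : Fin s).val = 0 ↔ _
    rw [counterDFA_evalFrom_cons, Nat.dvd_iff_mod_eq_zero, List.length_cons, ← add_assoc]
    rfl

theorem accepts_counterDFA_self (hc : 0 < c) (hcs : c < s) :
    (counterDFA s c c hc hcs.le hcs : DFA α (Fin s)).accepts =
      lengthLanguage fun t => 0 < t ∧ c ∣ t := by
  ext x
  rw [mem_accepts_counterDFA, mem_lengthLanguage, Nat.dvd_add_right dvd_rfl, List.length_pos_iff]
  exact ⟨fun h => ⟨fun hx => hc.ne' (h.2 hx), h.1⟩, fun h => ⟨h.2, fun hx => absurd hx h.1⟩⟩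

theorem accepts_counterDFA_zero (hc : 0 < c) (hcs : c ≤ s) :
    (counterDFA s c 0 hc hcs (hc.trans_le hcs) : DFA α (Fin s)).accepts =
      lengthLanguage (c ∣ ·) := by
  ext x
  simp only [mem_accepts_counterDFA, mem_lengthLanguage, zero_add, imp_true_iff, and_true]

theorem posClosure_accepts_counterDFA_self (hc : 0 < c) (hcs : c < s) :
    posClosure (counterDFA s c c hc hcs.le hcs : DFA α (Fin s)).accepts =
      lengthLanguage fun t => 0 < t ∧ c ∣ t := by
  rw [accepts_counterDFA_self, posClosure_lengthLanguage]
  exact fun a b ha hb => ⟨Nat.add_pos_left ha.1 b, dvd_add ha.2 hb.2⟩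

theorem posClosure_accepts_counterDFA_zero (hc : 0 < c) (hcs : c ≤ s) :
    posClosure (counterDFA s c 0 hc hcs (hc.trans_le hcs) : DFA α (Fin s)).accepts =
      lengthLanguage (c ∣ ·) := by
  rw [accepts_counterDFA_zero, posClosure_lengthLanguage]
  exact fun _ _ => dvd_add

end CounterDFA

theorem exists_dfa_isLeast_length_posClosure_eq_lcm {α : Type*} [Nonempty α] {m n i j : ℕ}
    (hi : 0 < i) (him : i < m) (hj : 0 < j) (hjn : j ≤ n) :
    ∃ (M₁ : DFA α (Fin m)) (M₂ : DFA α (Fin n)),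
      IsLeast (List.length '' {x | x ∈ posClosure M₁.accepts ∧ x ∈ posClosure M₂.accepts})
        (i.lcm j) := by
  refine ⟨counterDFA m i i hi him.le him, counterDFA n j 0 hj hjn (hj.trans_le hjn), ?_⟩
  simp only [posClosure_accepts_counterDFA_self, posClosure_accepts_counterDFA_zero,
    mem_lengthLanguage]
  obtain ⟨a⟩ := ‹Nonempty α›
  refine ⟨⟨List.replicate (i.lcm j) a, ?_, List.length_replicate⟩, ?_⟩
  · rw [Set.mem_ofPred_eq, List.length_replicate]
    exact ⟨⟨Nat.lcm_pos hi hj, Nat.dvd_lcm_left i j⟩, Nat.dvd_lcm_right i j⟩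
  · rintro _ ⟨x, ⟨⟨hpos, hix⟩, hjx⟩, rfl⟩
    exact Nat.le_of_dvd hpos (Nat.lcm_dvd hix hjx)

theorem exists_Gprime_eq_lcm {m n : ℕ} (hm : 1 ≤ m) (hn : 1 ≤ n) (h : (m, n) ≠ (1, 1)) :
    ∃ i j, 0 < i ∧ i ≤ m ∧ 0 < j ∧ j ≤ n ∧ (i < m ∨ j < n) ∧ Gprime m n = i.lcm j := by
  obtain ⟨⟨i, j⟩, hij, hG⟩ :=
    Finset.exists_mem_eq_sup ((Finset.Icc 1 m ×ˢ Finset.Icc 1 n).erase (m, n))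
      ⟨(1, 1), by simp [Finset.mem_erase, h.symm, hm, hn]⟩ fun p => p.1.lcm p.2
  simp only [Finset.mem_erase, Finset.mem_product, Finset.mem_Icc, ne_eq, Prod.mk.injEq] at hij
  exact ⟨i, j, hij.2.1.1, hij.2.1.2, hij.2.2.1, hij.2.2.2, by omega, hG⟩

/-- For all `m, n ≥ 1` there exist unary DFAs with `m` and `n` states such
that `L(M₁)⁺ ∩ L(M₂)⁺` is nonempty and its shortest string has length exactly
`G'(m,n)`. -/
theorem unary_dfa_posClosure_intersection_shortest_string_tight (m n : ℕ)
    (hm : 1 ≤ m) (hn : 1 ≤ n) :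
    ∃ (M₁ : DFA (Fin 1) (Fin m)) (M₂ : DFA (Fin 1) (Fin n)),
      (∃ x, x ∈ posClosure M₁.accepts ∧ x ∈ posClosure M₂.accepts ∧
        x.length = Gprime m n) ∧
      (∀ x, x ∈ posClosure M₁.accepts → x ∈ posClosure M₂.accepts →
        Gprime m n ≤ x.length) := by
  suffices ∃ (M₁ : DFA (Fin 1) (Fin m)) (M₂ : DFA (Fin 1) (Fin n)), IsLeast
      (List.length '' {x | x ∈ posClosure M₁.accepts ∧ x ∈ posClosure M₂.accepts}) (Gprime m n) by
    obtain ⟨M₁, M₂, ⟨x, ⟨hx₁, hx₂⟩, hx⟩, hle⟩ := this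
    exact ⟨M₁, M₂, ⟨x, hx₁, hx₂, hx⟩, fun x h₁ h₂ => hle ⟨x, ⟨h₁, h₂⟩, rfl⟩⟩
  rcases eq_or_ne (m, n) (1, 1) with h | h
  · obtain ⟨rfl, rfl⟩ := Prod.mk.inj h
    let M : DFA (Fin 1) (Fin 1) := counterDFA 1 1 0 one_pos le_rfl one_pos
    refine ⟨M, M, ⟨[], ?_, rfl⟩, fun _ _ => Nat.zero_le _⟩
    simp only [M, posClosure_accepts_counterDFA_zero, mem_lengthLanguage]
    exact ⟨one_dvd _, one_dvd _⟩
  obtain ⟨i, j, hi, him, hj, hjn, hlt, hG⟩ := exists_Gprime_eq_lcm hm hn h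
  rw [hG]
  rcases hlt with him | hjn
  · exact exists_dfa_isLeast_length_posClosure_eq_lcm (α := Fin 1) hi him hj hjn
  · obtain ⟨M₂, M₁, hM⟩ := exists_dfa_isLeast_length_posClosure_eq_lcm (α := Fin 1) hj hjn hi him
    exact ⟨M₁, M₂, by simpa only [and_comm, Nat.lcm_comm] using hM⟩
end

section
/- Let L₁ and L₂ be regular languages over a finite alphabet Σ. Then the language L = ⋃_{k ≥ 1} (L₁^k ∩ L₂^k) is context-free. -/
/-!
Run DFAs `M₁`, `M₂` for `L₁`, `L₂` side by side on `w`, allowing each of them to jump back to its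
start state from an accepting state. Then `w ∈ L₁ ^ k ∩ L₂ ^ k` iff some joint run ends in
accepting states and restarts each machine `k - 1` times. Read the restarts of `M₁` and of `M₂`
as two kinds of brackets: having equally many of each means that they can be matched in pairs
so that the pairs are properly nested, as in the grammar `S → aSbS | bSaS | ε`. The joint runs
with such a nested matching, between two given pairs of states, are generated by a context-free
grammar whose nonterminals are these pairs of pairs of states.
-/

namespace DFA

variable {α σ : Type*} (M : DFA α σ)

/-- A run of `M` that may jump back to `M.start` from an accepting state; `k` counts the jumps. -/
inductive RestartRun : σ → List α → ℕ → σ → Prop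
  | nil (p : σ) : RestartRun p [] 0 p
  | step {p' : σ} {w : List α} {k : ℕ} (p : σ) (t : α) :
      RestartRun (M.step p t) w k p' → RestartRun p (t :: w) k p'
  | restart {p' : σ} {w : List α} {k : ℕ} (p : σ) :
      p ∈ M.accept → RestartRun M.start w k p' → RestartRun p w (k + 1) p'

variable {M}

theorem RestartRun.evalFrom (p : σ) (w : List α) : M.RestartRun p w 0 (M.evalFrom p w) := by
  induction w generalizing p with
  | nil => exact .nil p
  | cons t w ih => exact .step p t (ih _)

theorem RestartRun.append {p p₁ p' : σ} {w w' : List α} {k k' : ℕ}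
    (h : M.RestartRun p w k p₁) (h' : M.RestartRun p₁ w' k' p') :
    M.RestartRun p (w ++ w') (k + k') p' := by
  induction h with
  | nil => simpa using h'
  | step p t _ ih => exact .step p t (ih h')
  | restart p hp _ ih => simpa [Nat.add_right_comm] using RestartRun.restart p hp (ih h')

theorem exists_restartRun_iff_mem_acceptsFrom_mul_pow {p : σ} {w : List α} {k : ℕ} :
    (∃ p' ∈ M.accept, M.RestartRun p w k p') ↔ w ∈ M.acceptsFrom p * M.accepts ^ k := by
  constructor
  · rintro ⟨p', hp', h⟩
    induction h with
    | nil p => simpa [mem_acceptsFrom] using hp'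
    | step p t _ ih =>
      obtain ⟨u, hu, v, hv, rfl⟩ := Language.mem_mul.mp (ih hp')
      exact Language.mem_mul.mpr ⟨t :: u, by simpa [mem_acceptsFrom] using hu, v, hv, rfl⟩
    | restart p hp _ ih =>
      rw [pow_succ']
      exact Language.mem_mul.mpr ⟨[], by simpa [mem_acceptsFrom] using hp, _, ih hp', rfl⟩
  · induction k generalizing p w with
    | zero =>
      intro hw
      rw [pow_zero, mul_one, mem_acceptsFrom] at hw
      exact ⟨_, hw, .evalFrom p w⟩
    | succ k ih =>
      intro hw
      rw [pow_succ'] at hw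
      obtain ⟨u, hu, v, hv, rfl⟩ := Language.mem_mul.mp hw
      obtain ⟨p', hp', h⟩ := ih hv
      exact ⟨p', hp', by simpa using (RestartRun.evalFrom p u).append (.restart _ hu h)⟩

theorem exists_restartRun_iff_mem_accepts_pow {w : List α} {k : ℕ} :
    (∃ p' ∈ M.accept, M.RestartRun M.start w k p') ↔ w ∈ M.accepts ^ (k + 1) := by
  rw [pow_succ', exists_restartRun_iff_mem_acceptsFrom_mul_pow]
  rfl

end DFA

namespace ContextFreeGrammar

variable {T N : Type*}

def formLanguage (S : N → Language T) (u : List (Symbol T N)) : Language T :=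
  (u.map fun | .terminal t => {[t]} | .nonterminal n => S n).prod

variable (S : N → Language T)

@[simp]
theorem formLanguage_append (u v : List (Symbol T N)) :
    formLanguage S (u ++ v) = formLanguage S u * formLanguage S v := by
  simp [formLanguage]

@[simp]
theorem formLanguage_nonterminal (n : N) : formLanguage S [.nonterminal n] = S n := by
  simp [formLanguage]

theorem mem_formLanguage_map_terminal (w : List T) :
    w ∈ formLanguage S (w.map .terminal) := by
  induction w with
  | nil => exact Language.nil_mem_one
  | cons t w ih => exact Language.append_mem_mul (Set.mem_singleton [t]) ih

variable {g : ContextFreeGrammar T} {S : g.NT → Language T}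

theorem Derives.formLanguage_le
    (hS : ∀ r ∈ g.rules, formLanguage S r.output ≤ S r.input) {u v : List (Symbol T g.NT)}
    (h : g.Derives u v) : formLanguage S v ≤ formLanguage S u := by
  induction h with
  | refl => exact le_rfl
  | tail _ hstep ih =>
    obtain ⟨r, hr, hrw⟩ := hstep
    obtain ⟨p, q, rfl, rfl⟩ := hrw.exists_parts
    refine le_trans ?_ ih
    simp only [formLanguage_append, formLanguage_nonterminal]
    gcongr
    exact hS r hr

theorem language_le_of_forall_rules (hS : ∀ r ∈ g.rules, formLanguage S r.output ≤ S r.input) :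
    g.language ≤ S g.initial := fun w hw ↦ by
  simpa using Derives.formLanguage_le hS hw (mem_formLanguage_map_terminal S w)

end ContextFreeGrammar

namespace MatchedPowers

section

variable {α σ₁ σ₂ : Type*} (M₁ : DFA α σ₁) (M₂ : DFA α σ₂)

/-- Joint runs of `M₁` and `M₂` on the same word in which each restart of one machine is paired
with a later restart of the other, the pairs being properly nested. -/
inductive BalancedRun : σ₁ × σ₂ → List α → σ₁ × σ₂ → Prop
  | nil (c : σ₁ × σ₂) : BalancedRun c [] c
  | letter (p : σ₁) (q : σ₂) (t : α) : BalancedRun (p, q) [t] (M₁.step p t, M₂.step q t)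
  | append {c e c' : σ₁ × σ₂} {w w' : List α} :
      BalancedRun c w e → BalancedRun e w' c' → BalancedRun c (w ++ w') c'
  | restart₁₂ {q : σ₂} {p' : σ₁} {q' : σ₂} {w : List α} (p : σ₁) :
      p ∈ M₁.accept → BalancedRun (M₁.start, q) w (p', q') → q' ∈ M₂.accept →
      BalancedRun (p, q) w (p', M₂.start)
  | restart₂₁ {p : σ₁} {p' : σ₁} {q' : σ₂} {w : List α} (q : σ₂) :
      q ∈ M₂.accept → BalancedRun (p, M₂.start) w (p', q') → p' ∈ M₁.accept →
      BalancedRun (p, q) w (M₁.start, q')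

variable {M₁ M₂}

theorem BalancedRun.exists_restartRuns {c c' : σ₁ × σ₂} {w : List α}
    (h : BalancedRun M₁ M₂ c w c') :
    ∃ k, M₁.RestartRun c.1 w k c'.1 ∧ M₂.RestartRun c.2 w k c'.2 := by
  induction h with
  | nil c => exact ⟨0, .nil _, .nil _⟩
  | letter p q t => exact ⟨0, .step p t (.nil _), .step q t (.nil _)⟩
  | append _ _ ih ih' =>
    obtain ⟨k, h₁, h₂⟩ := ih
    obtain ⟨k', h₁', h₂'⟩ := ih'
    exact ⟨k + k', h₁.append h₁', h₂.append h₂'⟩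
  | restart₁₂ p hp _ hq' ih =>
    obtain ⟨k, h₁, h₂⟩ := ih
    exact ⟨k + 1, .restart p hp h₁, by simpa using h₂.append (.restart _ hq' (.nil _))⟩
  | restart₂₁ q hq _ hp' ih =>
    obtain ⟨k, h₁, h₂⟩ := ih
    exact ⟨k + 1, by simpa using h₁.append (.restart _ hp' (.nil _)), .restart q hq h₂⟩

variable (M₁ M₂) in
/-- Joint runs in which `M₁` restarts `d` times more often than `M₂`, in the normal form
`B₀ r B₁ r ⋯ r B_|d|`: balanced runs `Bᵢ` separated by `|d|` unpaired restarts `r`, all of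
`M₁` if `d > 0` and all of `M₂` if `d < 0`. -/
inductive SkewRun : σ₁ × σ₂ → List α → ℤ → σ₁ × σ₂ → Prop
  | balanced {c c' : σ₁ × σ₂} {w : List α} : BalancedRun M₁ M₂ c w c' → SkewRun c w 0 c'
  | restart₁ {c c' : σ₁ × σ₂} {p : σ₁} {q : σ₂} {w w' : List α} {d : ℤ} :
      BalancedRun M₁ M₂ c w (p, q) → p ∈ M₁.accept → 0 ≤ d →
      SkewRun (M₁.start, q) w' d c' → SkewRun c (w ++ w') (d + 1) c'
  | restart₂ {c c' : σ₁ × σ₂} {p : σ₁} {q : σ₂} {w w' : List α} {d : ℤ} :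
      BalancedRun M₁ M₂ c w (p, q) → q ∈ M₂.accept → d ≤ 0 →
      SkewRun (p, M₂.start) w' d c' → SkewRun c (w ++ w') (d - 1) c'

namespace SkewRun

theorem balancedRun_append {c₀ c c' : σ₁ × σ₂} {w₀ w : List α} {d : ℤ}
    (h₀ : BalancedRun M₁ M₂ c₀ w₀ c) (h : SkewRun M₁ M₂ c w d c') :
    SkewRun M₁ M₂ c₀ (w₀ ++ w) d c' := by
  cases h with
  | balanced h => exact .balanced (h₀.append h)
  | restart₁ h hp hd h' => simpa using restart₁ (h₀.append h) hp hd h'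
  | restart₂ h hq hd h' => simpa using restart₂ (h₀.append h) hq hd h'

theorem step {p : σ₁} {q : σ₂} {c' : σ₁ × σ₂} {w : List α} {d : ℤ} (t : α)
    (h : SkewRun M₁ M₂ (M₁.step p t, M₂.step q t) w d c') : SkewRun M₁ M₂ (p, q) (t :: w) d c' :=
  balancedRun_append (.letter p q t) h

/-- If `d < 0`, the new restart of `M₁` is paired with the first unpaired restart of `M₂`. -/
theorem restart_fst {p : σ₁} {q : σ₂} {c' : σ₁ × σ₂} {w : List α} {d : ℤ}
    (hp : p ∈ M₁.accept) (h : SkewRun M₁ M₂ (M₁.start, q) w d c') :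
    SkewRun M₁ M₂ (p, q) w (d + 1) c' := by
  rcases le_or_gt 0 d with hd | hd
  · exact restart₁ (.nil _) hp hd h
  · cases h with
    | balanced => omega
    | restart₁ => omega
    | restart₂ h hq _ h' => simpa using balancedRun_append (.restart₁₂ p hp h hq) h'

theorem restart_snd {p : σ₁} {q : σ₂} {c' : σ₁ × σ₂} {w : List α} {d : ℤ}
    (hq : q ∈ M₂.accept) (h : SkewRun M₁ M₂ (p, M₂.start) w d c') :
    SkewRun M₁ M₂ (p, q) w (d - 1) c' := by
  rcases le_or_gt d 0 with hd | hd
  · exact restart₂ (.nil _) hq hd h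
  · cases h with
    | balanced => omega
    | restart₂ => omega
    | restart₁ h hp _ h' => simpa using balancedRun_append (.restart₂₁ q hq h hp) h'

theorem of_restartRuns : ∀ {p : σ₁} {q : σ₂} {w : List α} {k₁ k₂ : ℕ} {p' : σ₁} {q' : σ₂},
    M₁.RestartRun p w k₁ p' → M₂.RestartRun q w k₂ q' → SkewRun M₁ M₂ (p, q) w (k₁ - k₂) (p', q')
  | _, _, _, _, _, _, _, .restart _ hp h₁, h₂ => by
    simpa [add_sub_right_comm] using restart_fst hp (of_restartRuns h₁ h₂)
  | _, _, _, _, _, _, _, h₁, .restart _ hq h₂ => by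
    simpa [sub_add_eq_sub_sub] using restart_snd hq (of_restartRuns h₁ h₂)
  | _, _, _, _, _, _, _, .nil _, .nil _ => .balanced (.nil _)
  | _, _, _, _, _, _, _, .step _ t h₁, .step _ _ h₂ => step t (of_restartRuns h₁ h₂)
termination_by _ _ w k₁ k₂ => w.length + k₁ + k₂

theorem balancedRun {c c' : σ₁ × σ₂} {w : List α} (h : SkewRun M₁ M₂ c w 0 c') :
    BalancedRun M₁ M₂ c w c' := by
  generalize hd : (0 : ℤ) = d at h
  cases h with
  | balanced h => exact h
  | restart₁ => omega
  | restart₂ => omega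

end SkewRun

theorem balancedRun_iff_exists_restartRuns {p p' : σ₁} {q q' : σ₂} {w : List α} :
    BalancedRun M₁ M₂ (p, q) w (p', q') ↔
      ∃ k, M₁.RestartRun p w k p' ∧ M₂.RestartRun q w k q' :=
  ⟨BalancedRun.exists_restartRuns, fun ⟨k, h₁, h₂⟩ ↦
    (by simpa using SkewRun.of_restartRuns h₁ h₂ : SkewRun M₁ M₂ _ w 0 _).balancedRun⟩

theorem exists_balancedRun_iff {w : List α} :
    (∃ p' ∈ M₁.accept, ∃ q' ∈ M₂.accept, BalancedRun M₁ M₂ (M₁.start, M₂.start) w (p', q')) ↔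
      ∃ k, 1 ≤ k ∧ w ∈ M₁.accepts ^ k ∧ w ∈ M₂.accepts ^ k := by
  simp only [balancedRun_iff_exists_restartRuns]
  constructor
  · rintro ⟨p', hp', q', hq', k, h₁, h₂⟩
    exact ⟨k + 1, by omega, DFA.exists_restartRun_iff_mem_accepts_pow.mp ⟨p', hp', h₁⟩,
      DFA.exists_restartRun_iff_mem_accepts_pow.mp ⟨q', hq', h₂⟩⟩
  · rintro ⟨_ | k, hk, hw₁, hw₂⟩
    · omega
    obtain ⟨p', hp', h₁⟩ := DFA.exists_restartRun_iff_mem_accepts_pow.mpr hw₁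
    obtain ⟨q', hq', h₂⟩ := DFA.exists_restartRun_iff_mem_accepts_pow.mpr hw₂
    exact ⟨p', hp', q', hq', k, h₁, h₂⟩

end

open ContextFreeGrammar

/-- `some (c, c')` stands for the balanced runs from `c` to `c'`; `none` is the initial
nonterminal. -/
abbrev Nonterminal (σ₁ σ₂ : Type) : Type := Option ((σ₁ × σ₂) × (σ₁ × σ₂))

variable {α σ₁ σ₂ : Type} (M₁ : DFA α σ₁) (M₂ : DFA α σ₂)

inductive IsRule : ContextFreeRule α (Nonterminal σ₁ σ₂) → Prop
  | initial {p : σ₁} {q : σ₂} : p ∈ M₁.accept → q ∈ M₂.accept →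
      IsRule ⟨none, [.nonterminal (some ((M₁.start, M₂.start), (p, q)))]⟩
  | nil (c : σ₁ × σ₂) : IsRule ⟨some (c, c), []⟩
  | letter (p : σ₁) (q : σ₂) (t : α) :
      IsRule ⟨some ((p, q), (M₁.step p t, M₂.step q t)), [.terminal t]⟩
  | append (c e c' : σ₁ × σ₂) :
      IsRule ⟨some (c, c'), [.nonterminal (some (c, e)), .nonterminal (some (e, c'))]⟩
  | restart₁₂ {p p' : σ₁} {q q' : σ₂} : p ∈ M₁.accept → q' ∈ M₂.accept →
      IsRule ⟨some ((p, q), (p', M₂.start)), [.nonterminal (some ((M₁.start, q), (p', q')))]⟩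
  | restart₂₁ {p p' : σ₁} {q q' : σ₂} : q ∈ M₂.accept → p' ∈ M₁.accept →
      IsRule ⟨some ((p, q), (M₁.start, q')), [.nonterminal (some ((p, M₂.start), (p', q')))]⟩

def nonterminalLanguage : Nonterminal σ₁ σ₂ → Language α
  | none => {w | ∃ p ∈ M₁.accept, ∃ q ∈ M₂.accept,
      BalancedRun M₁ M₂ (M₁.start, M₂.start) w (p, q)}
  | some (c, c') => {w | BalancedRun M₁ M₂ c w c'}

variable {M₁ M₂}

theorem IsRule.output_length_le {r : ContextFreeRule α (Nonterminal σ₁ σ₂)}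
    (hr : IsRule M₁ M₂ r) : r.output.length ≤ 2 := by
  cases hr <;> simp

theorem IsRule.formLanguage_output_le {r : ContextFreeRule α (Nonterminal σ₁ σ₂)}
    (hr : IsRule M₁ M₂ r) :
    formLanguage (nonterminalLanguage M₁ M₂) r.output ≤ nonterminalLanguage M₁ M₂ r.input := by
  cases hr with
  | initial hp hq => exact fun w hw ↦ ⟨_, hp, _, hq, by simpa [nonterminalLanguage] using hw⟩
  | nil c => exact fun w hw ↦ (Language.mem_one w).mp hw ▸ .nil c
  | letter p q t =>
    change {[t]} * 1 ≤ _
    rw [mul_one]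
    rintro _ rfl
    exact .letter p q t
  | append c e c' =>
    change formLanguage _ ([_] ++ [_]) ≤ _
    rw [formLanguage_append, formLanguage_nonterminal, formLanguage_nonterminal]
    rintro _ ⟨u, hu, v, hv, rfl⟩
    exact .append hu hv
  | restart₁₂ hp hq' =>
    rw [formLanguage_nonterminal]
    exact fun w hw ↦ .restart₁₂ _ hp hw hq'
  | restart₂₁ hq hp' =>
    rw [formLanguage_nonterminal]
    exact fun w hw ↦ .restart₂₁ _ hq hw hp'

variable [Fintype α] [Fintype σ₁] [Fintype σ₂]

variable (M₁ M₂) in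
theorem finite_setOf_isRule : {r | IsRule M₁ M₂ r}.Finite :=
  ((Set.finite_univ.prod (List.finite_length_le _ 2)).image
    fun x ↦ (⟨x.1, x.2⟩ : ContextFreeRule α _)).subset
    fun r hr ↦ ⟨(r.input, r.output), ⟨trivial, hr.output_length_le⟩, rfl⟩

variable (M₁ M₂) in
noncomputable def balancedRunGrammar : ContextFreeGrammar α :=
  ⟨Nonterminal σ₁ σ₂, none, (finite_setOf_isRule M₁ M₂).toFinset⟩

theorem produces_of_isRule {r : ContextFreeRule α (Nonterminal σ₁ σ₂)} (hr : IsRule M₁ M₂ r) :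
    (balancedRunGrammar M₁ M₂).Produces [.nonterminal r.input] r.output :=
  ⟨r, (Set.Finite.mem_toFinset _).mpr hr, ContextFreeRule.Rewrites.input_output⟩

theorem BalancedRun.derives {c c' : σ₁ × σ₂} {w : List α} (h : BalancedRun M₁ M₂ c w c') :
    (balancedRunGrammar M₁ M₂).Derives [.nonterminal (some (c, c'))] (w.map .terminal) := by
  induction h with
  | nil c => exact (produces_of_isRule (.nil c)).single
  | letter p q t => exact (produces_of_isRule (.letter p q t)).single
  | @append c e c' _ _ _ _ ih ih' =>
    refine (produces_of_isRule (.append c e c')).trans_derives ?_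
    rw [List.map_append]
    exact (ih.append_right _).trans (ih'.append_left _)
  | restart₁₂ p hp _ hq' ih => exact (produces_of_isRule (.restart₁₂ hp hq')).trans_derives ih
  | restart₂₁ q hq _ hp' ih => exact (produces_of_isRule (.restart₂₁ hq hp')).trans_derives ih

theorem mem_balancedRunGrammar_language {w : List α} :
    w ∈ (balancedRunGrammar M₁ M₂).language ↔
      ∃ k, 1 ≤ k ∧ w ∈ M₁.accepts ^ k ∧ w ∈ M₂.accepts ^ k := by
  rw [← exists_balancedRun_iff]
  constructor
  · exact fun hw ↦ language_le_of_forall_rules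
      (fun r hr ↦ ((Set.Finite.mem_toFinset _).mp hr).formLanguage_output_le) hw
  · rintro ⟨p, hp, q, hq, h⟩
    exact (produces_of_isRule (.initial hp hq)).trans_derives h.derives

end MatchedPowers

/-- If `L₁` and `L₂` are regular languages, then `⋃_{k ≥ 1} (L₁^k ∩ L₂^k)` is
context-free. -/
theorem matched_powers_contextFree {α : Type} [Fintype α]
    (L₁ L₂ : Language α) (h₁ : L₁.IsRegular) (h₂ : L₂.IsRegular) :
    Language.IsContextFree {x | ∃ k : ℕ, 1 ≤ k ∧ x ∈ L₁ ^ k ∧ x ∈ L₂ ^ k} := by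
  obtain ⟨σ₁, _, M₁, rfl⟩ := h₁
  obtain ⟨σ₂, _, M₂, rfl⟩ := h₂
  exact ⟨_, Language.ext fun _ ↦ MatchedPowers.mem_balancedRunGrammar_language⟩
end

section
/- Over the three-letter alphabet {a,b,c}, let L₁ = {b,c}*a{b,c}* (strings with exactly one a), L₂ = {a,c}*b{a,c}* (strings with exactly one b), and L₃ = {a,b}*c{a,b}* (strings with exactly one c). Then ⋃_{k ≥ 1} (L₁^k ∩ L₂^k ∩ L₃^k) = { x ∈ {a,b,c}* : |x|_a = |x|_b = |x|_c ≥ 1 }, and this language is not context-free. -/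
/-!
Pumping lemma, proved on derivations with step counts. Let every right-hand side be shorter than
`K` and let `R` nonterminals head rules. A derivation of a word longer than `K ^ R` contains a
subderivation `M ⇒* w'` with `K ^ R < |w'| ≤ K ^ (R + 1)`. Descending from `M`, each time to a
child yielding more than a `K`-th of its parent's yield, meets `R + 1` nonterminals, so some `P`
repeats: `P ⇒⁺ V P Y`, `P ⇒* x`, with `V x Y` inside `w'`. Without Chomsky normal form the loop
may have `V = Y = []`; then it is cut out, and we induct on the number of steps.

Pumping `0ⁿ1ⁿ2ⁿ` (`n > p`) once more adds `(V ++ Y).count σ` letters `σ` for each `σ`, so `V ++ Y`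
has equally many `0`s, `1`s and `2`s; but `V x Y`, of length at most `p < n`, cannot reach from the
`0`-block to the `2`-block, so `V ++ Y` lacks `0` or `2`, hence is empty.
-/

namespace ContextFreeRule

variable {T N : Type*} {r : ContextFreeRule T N}

lemma Rewrites.append_cases {u₁ u₂ v : List (Symbol T N)} (h : r.Rewrites (u₁ ++ u₂) v) :
    (∃ v₁, r.Rewrites u₁ v₁ ∧ v = v₁ ++ u₂) ∨
      ∃ v₂, r.Rewrites u₂ v₂ ∧ v = u₁ ++ v₂ := by
  induction u₁ generalizing v with
  | nil => exact .inr ⟨v, h, rfl⟩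
  | cons x u₁ ih =>
    cases h with
    | head => exact .inl ⟨_, .head u₁, by simp⟩
    | cons _ h =>
      rcases ih h with ⟨v₁, h₁, rfl⟩ | ⟨v₂, h₂, rfl⟩
      · exact .inl ⟨x :: v₁, h₁.cons x, rfl⟩
      · exact .inr ⟨v₂, h₂, rfl⟩

end ContextFreeRule

namespace ContextFreeGrammar

variable {T : Type*} {g : ContextFreeGrammar T}

inductive DerivesIn (g : ContextFreeGrammar T) :
    ℕ → List (Symbol T g.NT) → List (Symbol T g.NT) → Prop
  | refl (u : List (Symbol T g.NT)) : g.DerivesIn 0 u u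
  | head {n : ℕ} {u v w : List (Symbol T g.NT)} :
      g.Produces u v → g.DerivesIn n v w → g.DerivesIn (n + 1) u w

namespace DerivesIn

variable {m n : ℕ} {u v w u' v' : List (Symbol T g.NT)}

lemma trans (h₁ : g.DerivesIn m u v) (h₂ : g.DerivesIn n v w) : g.DerivesIn (m + n) u w := by
  induction h₁ with
  | refl => simpa using h₂
  | head hp _ ih => rw [Nat.add_right_comm]; exact head hp (ih h₂)

lemma append_left (h : g.DerivesIn n u v) (p : List (Symbol T g.NT)) :
    g.DerivesIn n (p ++ u) (p ++ v) := by
  induction h with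
  | refl => exact refl _
  | head hp _ ih => exact head (hp.append_left p) ih

lemma append_right (h : g.DerivesIn n u v) (p : List (Symbol T g.NT)) :
    g.DerivesIn n (u ++ p) (v ++ p) := by
  induction h with
  | refl => exact refl _
  | head hp _ ih => exact head (hp.append_right p) ih

lemma append (h : g.DerivesIn m u v) (h' : g.DerivesIn n u' v') :
    g.DerivesIn (m + n) (u ++ u') (v ++ v') :=
  (h.append_right u').trans (h'.append_left v)

lemma trans_middle {p q : List (Symbol T g.NT)} (h₁ : g.DerivesIn m u (p ++ v ++ q))
    (h₂ : g.DerivesIn n v w) : g.DerivesIn (m + n) u (p ++ w ++ q) :=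
  h₁.trans ((h₂.append_left p).append_right q)

lemma derives (h : g.DerivesIn n u v) : g.Derives u v := by
  induction h with
  | refl => exact Derives.refl _
  | head hp _ ih => exact hp.trans_derives ih

lemma append_split {u₁ u₂ : List (Symbol T g.NT)} (h : g.DerivesIn n (u₁ ++ u₂) w) :
    ∃ w₁ w₂ n₁ n₂, w = w₁ ++ w₂ ∧ n₁ + n₂ = n ∧
      g.DerivesIn n₁ u₁ w₁ ∧ g.DerivesIn n₂ u₂ w₂ := by
  generalize hu : u₁ ++ u₂ = u at h
  induction h generalizing u₁ u₂ with
  | refl => exact ⟨u₁, u₂, 0, 0, hu.symm, rfl, refl _, refl _⟩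
  | head hp _ ih =>
    subst hu
    obtain ⟨r, hr, hrw⟩ := hp
    rcases hrw.append_cases with ⟨v₁, hv₁, rfl⟩ | ⟨v₂, hv₂, rfl⟩
    · obtain ⟨w₁, w₂, n₁, n₂, rfl, rfl, h₁, h₂⟩ := ih rfl
      exact ⟨w₁, w₂, n₁ + 1, n₂, rfl, by omega, head ⟨r, hr, hv₁⟩ h₁, h₂⟩
    · obtain ⟨w₁, w₂, n₁, n₂, rfl, rfl, h₁, h₂⟩ := ih rfl
      exact ⟨w₁, w₂, n₁, n₂ + 1, rfl, by omega, h₁, head ⟨r, hr, hv₂⟩ h₂⟩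

lemma eq_of_terminals {x : List T} (h : g.DerivesIn n (x.map .terminal) v) :
    v = x.map .terminal ∧ n = 0 := by
  cases h with
  | refl => exact ⟨rfl, rfl⟩
  | head hp _ =>
    obtain ⟨r, -, hr⟩ := hp.exists_nonterminal_input_mem
    simp at hr

lemma exists_rule {N : g.NT} (h : g.DerivesIn (n + 1) [.nonterminal N] w) :
    ∃ r ∈ g.rules, r.input = N ∧ g.DerivesIn n r.output w := by
  obtain _ | ⟨⟨r, hr, hrw⟩, h⟩ := h
  cases hrw with
  | head => exact ⟨r, hr, rfl, by simpa using h⟩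
  | cons _ hrw => cases hrw

lemma pos_of_terminals {N : g.NT} {x : List T}
    (h : g.DerivesIn n [.nonterminal N] (x.map .terminal)) : 0 < n := by
  obtain _ | n := n
  · generalize hx : x.map Symbol.terminal = v at h
    cases h
    simp at hx
  · exact n.succ_pos

lemma mem_image_input [DecidableEq g.NT] {N : g.NT} {x : List T}
    (h : g.DerivesIn n [.nonterminal N] (x.map .terminal)) :
    N ∈ g.rules.image ContextFreeRule.input := by
  obtain ⟨n, rfl⟩ := Nat.exists_eq_add_one_of_ne_zero h.pos_of_terminals.ne'
  obtain ⟨r, hr, rfl, -⟩ := h.exists_rule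
  exact Finset.mem_image_of_mem _ hr

lemma exists_heavy_nonterminal {s : List (Symbol T g.NT)} {x : List T} {t : ℕ}
    (h : g.DerivesIn n s (x.map .terminal)) (ht : 0 < t) (hx : s.length * t < x.length) :
    ∃ M A x' B c e, x = A ++ x' ++ B ∧ t < x'.length ∧ c + e = n ∧
      g.DerivesIn c s (A.map .terminal ++ [.nonterminal M] ++ B.map .terminal) ∧
      g.DerivesIn e [.nonterminal M] (x'.map .terminal) := by
  induction s generalizing x n with
  | nil =>
    have hx' := (h.eq_of_terminals (x := [])).1
    simp_all
  | cons σ s ih =>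
    obtain ⟨w₁, w₂, n₁, n₂, hw, rfl, h₁, h₂⟩ := h.append_split (u₁ := [σ])
    obtain ⟨x₁, x₂, rfl, rfl, rfl⟩ := List.map_eq_append_iff.mp hw
    by_cases hx₁ : t < x₁.length
    · cases σ with
      | terminal a =>
        have := congrArg List.length (h₁.eq_of_terminals (x := [a])).1
        simp at this
        omega
      | nonterminal M =>
        exact ⟨M, [], x₁, x₂, n₂, n₁, by simp, hx₁, by omega,
          by simpa using h₂.append_left [.nonterminal M], h₁⟩
    · obtain ⟨M, A, x', B, c, e, rfl, hx', rfl, hc, he⟩ :=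
        ih h₂ (by simp only [List.length_cons, List.length_append] at hx; nlinarith)
      exact ⟨M, x₁ ++ A, x', B, n₁ + c, e, by simp, hx', by omega,
        by simpa using h₁.append hc, he⟩

lemma exists_heavy_child {K d : ℕ} (hK : ∀ r ∈ g.rules, r.output.length < K) {N : g.NT}
    {x : List T} (h : g.DerivesIn n [.nonterminal N] (x.map .terminal))
    (hx : K ^ (d + 1) < x.length) :
    ∃ M A x' B c e, x = A ++ x' ++ B ∧ K ^ d < x'.length ∧ 0 < c ∧ c + e = n ∧
      g.DerivesIn c [.nonterminal N] (A.map .terminal ++ [.nonterminal M] ++ B.map .terminal) ∧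
      g.DerivesIn e [.nonterminal M] (x'.map .terminal) := by
  obtain ⟨n, rfl⟩ := Nat.exists_eq_add_one_of_ne_zero h.pos_of_terminals.ne'
  obtain ⟨r, hr, rfl, hout⟩ := h.exists_rule
  have hKd₀ : 0 < K ^ d := Nat.pow_pos (Nat.zero_lt_of_lt (hK r hr))
  have hKd : r.output.length * K ^ d < x.length := calc
    r.output.length * K ^ d < K * K ^ d := Nat.mul_lt_mul_of_pos_right (hK r hr) hKd₀
    _ = K ^ (d + 1) := (pow_succ' K d).symm
    _ < x.length := hx
  obtain ⟨M, A, x', B, c, e, rfl, hx', rfl, hc, he⟩ := hout.exists_heavy_nonterminal hKd₀ hKd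
  exact ⟨M, A, x', B, 1 + c, e, rfl, hx', by omega, by omega,
    (head ⟨r, hr, .input_output⟩ (refl _)).trans hc, he⟩

lemma exists_subderivation_length_mem_Ioc {K : ℕ} (hK : ∀ r ∈ g.rules, r.output.length < K)
    (d : ℕ) {N : g.NT} {x : List T} (h : g.DerivesIn n [.nonterminal N] (x.map .terminal))
    (hx : K ^ d < x.length) :
    ∃ M A x' B c e, x = A ++ x' ++ B ∧ x'.length ∈ Set.Ioc (K ^ d) (K ^ (d + 1)) ∧ c + e = n ∧
      g.DerivesIn c [.nonterminal N] (A.map .terminal ++ [.nonterminal M] ++ B.map .terminal) ∧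
      g.DerivesIn e [.nonterminal M] (x'.map .terminal) := by
  induction n using Nat.strong_induction_on generalizing N x with
  | _ n ih =>
  by_cases hx' : x.length ≤ K ^ (d + 1)
  · exact ⟨N, [], x, [], 0, n, by simp, ⟨hx, hx'⟩, by simp, by simpa using refl _, h⟩
  obtain ⟨M, A, x₁, B, c, e, rfl, hx₁, hc, rfl, hAB, he⟩ :=
    h.exists_heavy_child hK (not_le.mp hx')
  obtain ⟨P, A', x', B', c', e', rfl, hx', rfl, hc', he'⟩ := ih e (by omega) he hx₁
  exact ⟨P, A ++ A', x', B' ++ B, c + c', e', by simp, hx', by omega,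
    by simpa using hAB.trans_middle hc', he'⟩

end DerivesIn

lemma Derives.exists_derivesIn {u v : List (Symbol T g.NT)} (h : g.Derives u v) :
    ∃ n, g.DerivesIn n u v := by
  induction h using Relation.ReflTransGen.head_induction_on with
  | refl => exact ⟨0, .refl _⟩
  | head hp _ ih => obtain ⟨n, hn⟩ := ih; exact ⟨n + 1, .head hp hn⟩

lemma Derives.pump {P : g.NT} {V Y : List (Symbol T g.NT)}
    (h : g.Derives [.nonterminal P] (V ++ [.nonterminal P] ++ Y)) (i : ℕ) :
    g.Derives [.nonterminal P]
      ((List.replicate i V).flatten ++ [.nonterminal P] ++ (List.replicate i Y).flatten) := by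
  induction i with
  | zero => exact Derives.refl _
  | succ i ih =>
    rw [List.replicate_succ, List.replicate_succ' (a := Y)]
    simpa using h.trans ((ih.append_left V).append_right Y)

def DerivesInViaLoop (g : ContextFreeGrammar T) (n : ℕ) (N : g.NT) (A V x Y B : List T) :
    Prop :=
  ∃ P c₁ c₂ c₃, 0 < c₂ ∧ c₁ + c₂ + c₃ = n ∧
    g.DerivesIn c₁ [.nonterminal N] (A.map .terminal ++ [.nonterminal P] ++ B.map .terminal) ∧
    g.DerivesIn c₂ [.nonterminal P] (V.map .terminal ++ [.nonterminal P] ++ Y.map .terminal) ∧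
    g.DerivesIn c₃ [.nonterminal P] (x.map .terminal)

namespace DerivesInViaLoop

variable {n c : ℕ} {N M : g.NT} {A V x Y B A₀ B₀ : List T}

lemma lift (h₀ : g.DerivesIn c [.nonterminal N]
      (A₀.map .terminal ++ [.nonterminal M] ++ B₀.map .terminal))
    (h : g.DerivesInViaLoop n M A V x Y B) :
    g.DerivesInViaLoop (c + n) N (A₀ ++ A) V x Y (B ++ B₀) := by
  obtain ⟨P, c₁, c₂, c₃, hc₂, rfl, h₁, h₂, h₃⟩ := h
  exact ⟨P, c + c₁, c₂, c₃, hc₂, by omega, by simpa using h₀.trans_middle h₁, h₂, h₃⟩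

lemma exists_derivesIn_lt (h : g.DerivesInViaLoop n N A V x Y B) :
    ∃ m < n, g.DerivesIn m [.nonterminal N] ((A ++ x ++ B).map .terminal) := by
  obtain ⟨P, c₁, c₂, c₃, hc₂, rfl, h₁, -, h₃⟩ := h
  exact ⟨c₁ + c₃, by omega, by simpa using h₁.trans_middle h₃⟩

lemma derives_pump (h : g.DerivesInViaLoop n N A V x Y B) (i : ℕ) :
    g.Derives [.nonterminal N] ((A ++ (List.replicate i V).flatten ++ x ++
      (List.replicate i Y).flatten ++ B).map .terminal) := by
  obtain ⟨P, c₁, c₂, c₃, -, -, h₁, h₂, h₃⟩ := h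
  have hP : g.Derives [.nonterminal P]
      (((List.replicate i V).flatten ++ x ++ (List.replicate i Y).flatten).map .terminal) := by
    simpa using (h₂.derives.pump i).trans ((h₃.derives.append_left _).append_right _)
  simpa using h₁.derives.trans ((hP.append_left _).append_right _)

end DerivesInViaLoop

/-- The second alternative keeps the path down to `P`, so that an ancestor labelled `P` can close
the loop. -/
lemma DerivesIn.exists_loop_or_exists_not_mem [DecidableEq g.NT] {K n : ℕ}
    (hK : ∀ r ∈ g.rules, r.output.length < K) (s : Finset g.NT) {N : g.NT} {x : List T}
    (hN : N ∈ s) (h : g.DerivesIn n [.nonterminal N] (x.map .terminal))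
    (hx : K ^ s.card < x.length) :
    (∃ A V x' Y B, x = A ++ V ++ x' ++ Y ++ B ∧ g.DerivesInViaLoop n N A V x' Y B) ∨
      ∃ P ∉ s, ∃ A x' B c e, x = A ++ x' ++ B ∧ c + e = n ∧
        g.DerivesIn c [.nonterminal N]
          (A.map .terminal ++ [.nonterminal P] ++ B.map .terminal) ∧
        g.DerivesIn e [.nonterminal P] (x'.map .terminal) := by
  induction s using Finset.strongInduction generalizing N x n with
  | _ s ih =>
  have hcard : s.card - 1 + 1 = s.card := Nat.sub_add_cancel (Finset.card_pos.mpr ⟨N, hN⟩)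
  obtain ⟨M, A, x₁, B, c, e, rfl, hx₁, hc, rfl, hAB, he⟩ :=
    h.exists_heavy_child hK (d := s.card - 1) (by rwa [hcard])
  have hbelow :
      (∃ A' V x' Y B', A ++ x₁ ++ B = A' ++ V ++ x' ++ Y ++ B' ∧
        g.DerivesInViaLoop (c + e) N A' V x' Y B') ∨
      ∃ P ∉ s.erase N, ∃ A' x' B' c' e', A ++ x₁ ++ B = A' ++ x' ++ B' ∧ 0 < c' ∧
        c' + e' = c + e ∧
        g.DerivesIn c' [.nonterminal N]
          (A'.map .terminal ++ [.nonterminal P] ++ B'.map .terminal) ∧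
        g.DerivesIn e' [.nonterminal P] (x'.map .terminal) := by
    by_cases hM : M ∈ s.erase N
    · rcases ih _ (Finset.erase_ssubset hN) hM he (by rwa [Finset.card_erase_of_mem hN]) with
        ⟨A', V, x', Y, B', rfl, hloop⟩ | ⟨P, hP, A', x', B', c', e', rfl, rfl, hc', he'⟩
      · exact .inl ⟨A ++ A', V, x', Y, B' ++ B, by simp, hloop.lift hAB⟩
      · exact .inr ⟨P, hP, A ++ A', x', B' ++ B, c + c', e', by simp, by omega, by omega,
          by simpa using hAB.trans_middle hc', he'⟩
    · exact .inr ⟨M, hM, A, x₁, B, c, e, rfl, hc, rfl, hAB, he⟩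
  rcases hbelow with hloop | ⟨P, hP, A', x', B', c', e', hx, hc', hce, h₁, h₂⟩
  · exact .inl hloop
  by_cases hPN : P = N
  · subst hPN
    exact .inl ⟨[], A', x', B', [], by simpa using hx, P, 0, c', e', hc', by omega,
      by simpa using DerivesIn.refl _, h₁, h₂⟩
  · exact .inr ⟨P, fun hPs ↦ hP (Finset.mem_erase.mpr ⟨hPN, hPs⟩), A', x', B', c', e', hx, hce,
      h₁, h₂⟩

theorem DerivesIn.exists_pumping [DecidableEq g.NT] {K n : ℕ}
    (hK : ∀ r ∈ g.rules, r.output.length < K) {N : g.NT} {w : List T}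
    (h : g.DerivesIn n [.nonterminal N] (w.map .terminal))
    (hw : K ^ (g.rules.image ContextFreeRule.input).card < w.length) :
    ∃ u v x y z, w = u ++ v ++ x ++ y ++ z ∧ v ++ y ≠ [] ∧
      (v ++ x ++ y).length ≤ K ^ ((g.rules.image ContextFreeRule.input).card + 1) ∧
      ∀ i, g.Derives [.nonterminal N] ((u ++ (List.replicate i v).flatten ++ x ++
        (List.replicate i y).flatten ++ z).map .terminal) := by
  induction n using Nat.strong_induction_on generalizing w with
  | _ n ih =>
  obtain ⟨M, A, w', B, c, e, rfl, ⟨hw₁, hw₂⟩, rfl, hAB, he⟩ :=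
    h.exists_subderivation_length_mem_Ioc hK _ hw
  rcases he.exists_loop_or_exists_not_mem hK _ he.mem_image_input hw₁ with
    ⟨A', v, x, y, B', rfl, hloop⟩ | ⟨P, hP, _, _, _, _, _, _, _, _, hP'⟩
  · replace hloop := hloop.lift hAB
    by_cases hvy : v ++ y = []
    · obtain ⟨m, hm, h'⟩ := hloop.exists_derivesIn_lt
      obtain ⟨rfl, rfl⟩ := List.append_eq_nil_iff.mp hvy
      exact ih m hm (by simpa using h') (by simpa using hw)
    · exact ⟨A ++ A', v, x, y, B' ++ B, by simp, hvy, by simp at hw₂ ⊢; omega,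
        hloop.derives_pump⟩
  · exact absurd hP'.mem_image_input hP

end ContextFreeGrammar

theorem Language.IsContextFree.pumping_lemma {T : Type*} {L : Language T}
    (hL : L.IsContextFree) :
    ∃ p, ∀ w ∈ L, p < w.length → ∃ u v x y z, w = u ++ v ++ x ++ y ++ z ∧ v ++ y ≠ [] ∧
      (v ++ x ++ y).length ≤ p ∧
      ∀ i, u ++ (List.replicate i v).flatten ++ x ++ (List.replicate i y).flatten ++ z ∈ L := by
  classical
  obtain ⟨g, rfl⟩ := hL
  set R := (g.rules.image ContextFreeRule.input).card
  set K := g.rules.sup (·.output.length) + 1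
  have hK : ∀ r ∈ g.rules, r.output.length < K := fun r hr ↦
    Nat.lt_succ_of_le (Finset.le_sup (f := (·.output.length)) hr)
  refine ⟨K ^ (R + 1), fun w hw hlen ↦ ?_⟩
  obtain ⟨n, hn⟩ := ContextFreeGrammar.Derives.exists_derivesIn hw
  exact hn.exists_pumping hK ((Nat.pow_le_pow_right (Nat.succ_pos _) R.le_succ).trans_lt hlen)

namespace Language

variable {α : Type*} [DecidableEq α]

def exactlyOne (a : α) : Language α := {x | x.count a = 1}

@[simp]
lemma mem_exactlyOne {a : α} {x : List α} : x ∈ exactlyOne a ↔ x.count a = 1 := Iff.rfl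

lemma count_eq_of_mem_exactlyOne_pow {a : α} {k : ℕ} {x : List α}
    (h : x ∈ exactlyOne a ^ k) : x.count a = k := by
  induction k generalizing x with
  | zero => simp_all [Language.mem_one]
  | succ k ih =>
    rw [pow_succ, mem_mul] at h
    obtain ⟨y, hy, z, hz, rfl⟩ := h
    rw [List.count_append, ih hy, hz]

lemma mem_exactlyOne_pow_of_count_eq {a : α} :
    ∀ {x : List α} {k : ℕ}, x.count a = k + 1 → x ∈ exactlyOne a ^ (k + 1)
  | [], _, h => by simp at h
  | b :: x, k, h => by
    rw [pow_succ', mem_mul]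
    by_cases hb : b = a
    · subst hb
      obtain _ | k := k
      · exact ⟨b :: x, h, [], by simp, by simp⟩
      · exact ⟨[b], by simp, x, mem_exactlyOne_pow_of_count_eq (by simpa using h), rfl⟩
    · have hx : x.count a = k + 1 := by simpa [List.count_cons, hb] using h
      obtain ⟨y, hy, z, hz, rfl⟩ :=
        mem_mul.mp (pow_succ' (exactlyOne a) k ▸ mem_exactlyOne_pow_of_count_eq hx)
      exact ⟨b :: y, by simpa [List.count_cons, hb] using hy, z, hz, rfl⟩

lemma mem_exactlyOne_pow_iff {a : α} {k : ℕ} (hk : k ≠ 0) {x : List α} :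
    x ∈ exactlyOne a ^ k ↔ x.count a = k := by
  obtain ⟨k, rfl⟩ := Nat.exists_eq_add_one_of_ne_zero hk
  exact ⟨count_eq_of_mem_exactlyOne_pow, mem_exactlyOne_pow_of_count_eq⟩

end Language

lemma List.IsInfix.infix_left_or_infix_right {α : Type*} {s l₁ l₂ l₃ : List α}
    (h : s <:+: l₁ ++ l₂ ++ l₃) (hs : s.length ≤ l₂.length) :
    s <:+: l₁ ++ l₂ ∨ s <:+: l₂ ++ l₃ := by
  obtain ⟨u, z, h⟩ := h
  rw [List.append_assoc, List.append_assoc, List.append_eq_append_iff] at h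
  rcases h with ⟨t, rfl, h⟩ | ⟨t, rfl, h⟩
  · have hst : s <+: t ++ l₂ :=
      List.prefix_of_prefix_length_le (l₃ := t ++ l₂ ++ l₃) ⟨z, by simp [h]⟩ ⟨l₃, rfl⟩
        (by simp; omega)
    obtain ⟨r, hr⟩ := hst
    exact .inl ⟨u, r, by simp [← hr]⟩
  · exact .inr ⟨t, z, by simp [h]⟩

theorem Language.not_isContextFree_of_count_eq {L : Language (Fin 3)}
    (hmem : ∀ n ≠ 0, List.replicate n 0 ++ List.replicate n 1 ++ List.replicate n 2 ∈ L)
    (hcount : ∀ x ∈ L, x.count 0 = x.count 1 ∧ x.count 1 = x.count 2) : ¬ L.IsContextFree := by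
  intro hL
  obtain ⟨p, hp⟩ := hL.pumping_lemma
  obtain ⟨u, v, x, y, z, hw, hvy, hlen, hpump⟩ :=
    hp _ (hmem (p + 1) p.succ_ne_zero) (by simp; omega)
  have hgain : ∀ σ : Fin 3, (u ++ (List.replicate 2 v).flatten ++ x ++
      (List.replicate 2 y).flatten ++ z).count σ = p + 1 + (v ++ y).count σ := by
    intro σ
    have := congrArg (List.count σ) hw
    fin_cases σ <;> simp [List.count_replicate] at this ⊢ <;> omega
  have heq := hcount _ (hpump 2)
  rw [hgain, hgain, hgain] at heq
  have hinf : v ++ x ++ y <:+: List.replicate (p + 1) 0 ++ List.replicate (p + 1) 1 ++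
      List.replicate (p + 1) 2 := ⟨u, z, by simp [hw]⟩
  have hsub : v ++ y ⊆ v ++ x ++ y := fun σ hσ ↦ by simp at hσ ⊢; tauto
  have hzero : (v ++ y).count 0 = 0 ∨ (v ++ y).count 2 = 0 := by
    simp only [List.count_eq_zero]
    rcases hinf.infix_left_or_infix_right (by simpa using hlen.trans p.le_succ) with h | h
    · exact .inr fun h2 ↦ absurd (h.subset (hsub h2)) (by simp)
    · exact .inl fun h0 ↦ absurd (h.subset (hsub h0)) (by simp)
  refine hvy (List.eq_nil_iff_forall_not_mem.mpr fun σ ↦ List.count_eq_zero.mp ?_)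
  fin_cases σ <;> simp only [Fin.zero_eta, Fin.mk_one, Fin.reduceFinMk] <;> omega

/-- With `L₁, L₂, L₃` the languages over `{a,b,c}` (here `a = 0`, `b = 1`,
`c = 2`) of strings with exactly one `a`, exactly one `b`, and exactly one `c`
respectively, `⋃_{k ≥ 1} (L₁^k ∩ L₂^k ∩ L₃^k)` equals the set of strings with
equal positive numbers of `a`'s, `b`'s and `c`'s, and is not context-free. -/
theorem matched_powers_not_contextFree :
    let L₁ : Language (Fin 3) := {x | x.count 0 = 1}
    let L₂ : Language (Fin 3) := {x | x.count 1 = 1}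
    let L₃ : Language (Fin 3) := {x | x.count 2 = 1}
    let L : Language (Fin 3) :=
      {x | x.count 0 = x.count 1 ∧ x.count 1 = x.count 2 ∧ 1 ≤ x.count 0}
    {x | ∃ k : ℕ, 1 ≤ k ∧ x ∈ L₁ ^ k ∧ x ∈ L₂ ^ k ∧ x ∈ L₃ ^ k} = L ∧
      ¬ L.IsContextFree := by
  intro L₁ L₂ L₃ L
  refine ⟨Set.ext fun x ↦ ⟨?_, ?_⟩, Language.not_isContextFree_of_count_eq
    (fun n hn ↦ ⟨by simp [List.count_replicate], by simp [List.count_replicate],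
      by simp [List.count_replicate]; omega⟩) fun x hx ↦ ⟨hx.1, hx.2.1⟩⟩
  · rintro ⟨k, hk, h₀, h₁, h₂⟩
    have hk : k ≠ 0 := by omega
    replace h₀ := (Language.mem_exactlyOne_pow_iff hk).mp h₀
    replace h₁ := (Language.mem_exactlyOne_pow_iff hk).mp h₁
    replace h₂ := (Language.mem_exactlyOne_pow_iff hk).mp h₂
    exact ⟨by omega, by omega, by omega⟩
  · rintro ⟨h₀₁, h₁₂, h₀⟩
    have hk : x.count 0 ≠ 0 := by omega
    exact ⟨x.count 0, h₀, (Language.mem_exactlyOne_pow_iff hk).mpr rfl,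
      (Language.mem_exactlyOne_pow_iff hk).mpr h₀₁.symm,
      (Language.mem_exactlyOne_pow_iff hk).mpr (h₀₁.trans h₁₂).symm⟩
end

section
/- Let A = {a^{m₁}, …, a^{m_r}} and B = {a^{n₁}, …, a^{n_s}} be finite nonempty languages of nonempty words over the one-letter alphabet {a} (so all mᵢ, nⱼ ≥ 1). Then there exists k ≥ 1 with A^k ∩ B^k ≠ ∅ if and only if min_i mᵢ ≤ max_j nⱼ and min_j nⱼ ≤ max_i mᵢ. Moreover, if both conditions hold, then A^k ∩ B^k ≠ ∅ for some k with 1 ≤ k ≤ max(m₁, …, m_r, n₁, …, n_s). -/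
/-!
Over a one-letter alphabet a word lies in `A ^ k` exactly when its length lies in the `k`-fold
sumset `k • S`, which is contained in `[k * min S, k * max S]`; so a common element of `k • S`
and `k • T` with `k ≥ 1` forces `min S ≤ max T` and `min T ≤ max S`. Conversely, if
`m = min S < n = min T ≤ M = max S`, then `(M - m) * n = (M - n) * m + (n - m) * M` lies in both
`(M - m) • S` and `(M - m) • T`; if `min S = min T`, take `k = 1`.
-/

open scoped Pointwise

section LengthLanguage

variable {α : Type*}

def Language.ofLengths (S : Set ℕ) : Language α := {x | x.length ∈ S}

theorem Language.mem_pow_iff_length_mem_nsmul (S : Set ℕ) (k : ℕ) (x : List α) :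
    x ∈ (Language.ofLengths S : Language α) ^ k ↔ x.length ∈ k • S := by
  induction k generalizing x with
  | zero => simp
  | succ k ih =>
    rw [pow_succ', Language.mem_mul, succ_nsmul', Set.mem_add]
    constructor
    · rintro ⟨a, ha, b, hb, rfl⟩
      exact ⟨a.length, ha, b.length, (ih b).mp hb, (List.length_append ..).symm⟩
    · rintro ⟨i, hi, j, hj, hij⟩
      refine ⟨x.take i, ?_, x.drop i, (ih _).mpr ?_, x.take_append_drop i⟩
      · show (x.take i).length ∈ S
        rwa [List.length_take, min_eq_left (by omega)]
      · rwa [List.length_drop, ← hij, Nat.add_sub_cancel_left]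

theorem Language.exists_mem_pow_inter_iff [Inhabited α] (S T : Set ℕ) (k : ℕ) :
    (∃ x, x ∈ (Language.ofLengths S : Language α) ^ k ∧
        x ∈ (Language.ofLengths T : Language α) ^ k) ↔ (k • S ∩ k • T).Nonempty := by
  simp only [mem_pow_iff_length_mem_nsmul]
  constructor
  · rintro ⟨x, hxS, hxT⟩
    exact ⟨x.length, hxS, hxT⟩
  · rintro ⟨N, hNS, hNT⟩
    exact ⟨List.replicate N default, by simpa using hNS, by simpa using hNT⟩

end LengthLanguage

section SumsetBounds

variable {M : Type*} [AddCommMonoid M] [Preorder M] [AddLeftMono M] {S : Set M} {a N : M} {k : ℕ}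

theorem Set.nsmul_le_of_mem_nsmul (ha : ∀ i ∈ S, a ≤ i) (hN : N ∈ k • S) : k • a ≤ N := by
  obtain ⟨f, hfS, rfl⟩ := Set.mem_nsmul_iff_sum.mp hN
  simpa using Finset.univ.card_nsmul_le_sum f a fun i _ ↦ ha _ (hfS i)

theorem Set.le_nsmul_of_mem_nsmul (ha : ∀ i ∈ S, i ≤ a) (hN : N ∈ k • S) : N ≤ k • a := by
  obtain ⟨f, hfS, rfl⟩ := Set.mem_nsmul_iff_sum.mp hN
  simpa using Finset.univ.sum_le_card_nsmul f a fun i _ ↦ ha _ (hfS i)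

end SumsetBounds

theorem Finset.min'_le_max'_of_mem_nsmul {S T : Finset ℕ} (hS : S.Nonempty) (hT : T.Nonempty)
    {k N : ℕ} (hk : 1 ≤ k) (hNS : N ∈ k • (S : Set ℕ)) (hNT : N ∈ k • (T : Set ℕ)) :
    S.min' hS ≤ T.max' hT := by
  have lower : k * S.min' hS ≤ N := Set.nsmul_le_of_mem_nsmul (fun i hi ↦ S.min'_le i hi) hNS
  have upper : N ≤ k * T.max' hT := Set.le_nsmul_of_mem_nsmul (fun i hi ↦ T.le_max' i hi) hNT
  exact Nat.le_of_mul_le_mul_left (lower.trans upper) hk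

theorem sub_mul_mem_nsmul {S : Set ℕ} {m n M : ℕ} (hm : m ∈ S) (hM : M ∈ S) (hmn : m ≤ n)
    (hnM : n ≤ M) : (M - m) * n ∈ (M - m) • S := by
  have hk : M - m = (M - n) + (n - m) := by omega
  have hN : (M - m) * n = (M - n) • m + (n - m) • M := by
    simp only [smul_eq_mul]
    zify [hmn, hnM, hmn.trans hnM]
    ring
  rw [hN, hk, add_nsmul]
  exact Set.add_mem_add (Set.nsmul_mem_nsmul hm) (Set.nsmul_mem_nsmul hM)

theorem Finset.exists_nsmul_inter_nonempty_of_min'_lt {S T : Finset ℕ} (hS : S.Nonempty)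
    (hT : T.Nonempty) (hlt : S.min' hS < T.min' hT) (hle : T.min' hT ≤ S.max' hS) :
    ∃ k, 1 ≤ k ∧ k ≤ S.max' hS ∧ (k • (S : Set ℕ) ∩ k • (T : Set ℕ)).Nonempty := by
  refine ⟨S.max' hS - S.min' hS, by omega, by omega, (S.max' hS - S.min' hS) * T.min' hT, ?_, ?_⟩
  · exact sub_mul_mem_nsmul (S.min'_mem hS) (S.max'_mem hS) hlt.le hle
  · exact Set.nsmul_mem_nsmul (T.min'_mem hT)

theorem Finset.exists_nsmul_inter_nonempty {S T : Finset ℕ} (hS : S.Nonempty) (hT : T.Nonempty)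
    (hS1 : ∀ i ∈ S, 1 ≤ i) (h₁ : S.min' hS ≤ T.max' hT) (h₂ : T.min' hT ≤ S.max' hS) :
    ∃ k, 1 ≤ k ∧ k ≤ max (S.max' hS) (T.max' hT) ∧
      (k • (S : Set ℕ) ∩ k • (T : Set ℕ)).Nonempty := by
  rcases lt_trichotomy (S.min' hS) (T.min' hT) with hlt | heq | hgt
  · obtain ⟨k, hk, hkS, hN⟩ := exists_nsmul_inter_nonempty_of_min'_lt hS hT hlt h₂
    exact ⟨k, hk, hkS.trans (le_max_left _ _), hN⟩
  · refine ⟨1, le_rfl, ?_, T.min' hT, ?_, ?_⟩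
    · exact le_max_of_le_left ((hS1 _ (S.min'_mem hS)).trans (S.min'_le_max' hS))
    · simpa [← heq] using S.min'_mem hS
    · simpa using T.min'_mem hT
  · obtain ⟨k, hk, hkT, hN⟩ := exists_nsmul_inter_nonempty_of_min'_lt hT hS hgt h₁
    exact ⟨k, hk, hkT.trans (le_max_right _ _), Set.inter_comm _ _ ▸ hN⟩

theorem unary_matched_powers_general (S T : Finset ℕ) (hS : S.Nonempty) (hT : T.Nonempty)
    (hS1 : ∀ i ∈ S, 1 ≤ i)
    (A B : Language (Fin 1))
    (hA : A = {x | x.length ∈ S}) (hB : B = {x | x.length ∈ T}) :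
    ((∃ k : ℕ, 1 ≤ k ∧ ∃ x, x ∈ A ^ k ∧ x ∈ B ^ k) ↔
      (S.min' hS ≤ T.max' hT ∧ T.min' hT ≤ S.max' hS)) ∧
    (S.min' hS ≤ T.max' hT → T.min' hT ≤ S.max' hS →
      ∃ k : ℕ, 1 ≤ k ∧ k ≤ max (S.max' hS) (T.max' hT) ∧
        ∃ x, x ∈ A ^ k ∧ x ∈ B ^ k) := by
  have hA' : A = Language.ofLengths S := hA
  have hB' : B = Language.ofLengths T := hB
  simp only [hA', hB', Language.exists_mem_pow_inter_iff]
  refine ⟨⟨?_, fun ⟨h₁, h₂⟩ ↦ ?_⟩, Finset.exists_nsmul_inter_nonempty hS hT hS1⟩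
  · rintro ⟨k, hk, N, hNS, hNT⟩
    exact ⟨S.min'_le_max'_of_mem_nsmul hS hT hk hNS hNT,
      T.min'_le_max'_of_mem_nsmul hT hS hk hNT hNS⟩
  · obtain ⟨k, hk, -, hN⟩ := Finset.exists_nsmul_inter_nonempty hS hT hS1 h₁ h₂
    exact ⟨k, hk, hN⟩

/-- For finite nonempty unary languages `A`, `B` of nonempty words, encoded by
their nonempty exponent sets `S`, `T` of positive naturals: `A^k ∩ B^k ≠ ∅`
for some `k ≥ 1` iff `min S ≤ max T` and `min T ≤ max S`; and in that case
such a `k` exists with `1 ≤ k ≤ max(max S, max T)`. -/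
theorem unary_matched_powers (S T : Finset ℕ) (hS : S.Nonempty) (hT : T.Nonempty)
    (hS1 : ∀ i ∈ S, 1 ≤ i) (hT1 : ∀ j ∈ T, 1 ≤ j)
    (A B : Language (Fin 1))
    (hA : A = {x | x.length ∈ S}) (hB : B = {x | x.length ∈ T}) :
    ((∃ k : ℕ, 1 ≤ k ∧ ∃ x, x ∈ A ^ k ∧ x ∈ B ^ k) ↔
      (S.min' hS ≤ T.max' hT ∧ T.min' hT ≤ S.max' hS)) ∧
    (S.min' hS ≤ T.max' hT → T.min' hT ≤ S.max' hS →
      ∃ k : ℕ, 1 ≤ k ∧ k ≤ max (S.max' hS) (T.max' hT) ∧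
        ∃ x, x ∈ A ^ k ∧ x ∈ B ^ k) :=
  unary_matched_powers_general S T hS hT hS1 A B hA hB
end

section
/- For every integer n ≥ 2, let A = {a, a^n} and B = {a^{n−1}} be languages over the one-letter alphabet {a}. Then the least k ≥ 1 such that A^k ∩ B^k ≠ ∅ is k = n − 1; that is, A^{n−1} ∩ B^{n−1} ≠ ∅, and A^k ∩ B^k = ∅ for all k with 1 ≤ k < n − 1. -/
/-!
A word of `A^k` has length `i + j * n` with `i + j = k`, and a word of `B^k` has length
`k * (n - 1)`. Equating them forces `k = i * (n - 1)`, so a common word needs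
`n - 1 ∣ k`; conversely `(n - 1)^2 = 1 + (n - 2) * n` gives one for `k = n - 1`.
-/

namespace Language

variable {α : Type*} {L : Language α} {a b : ℕ}

theorem exists_length_eq_of_mem_pow (hL : ∀ w ∈ L, w.length = a ∨ w.length = b)
    {k : ℕ} {x : List α} (hx : x ∈ L ^ k) : ∃ i j, i + j = k ∧ x.length = i * a + j * b := by
  induction k generalizing x with
  | zero =>
    obtain rfl : x = [] := by simpa [pow_zero] using hx
    exact ⟨0, 0, rfl, by simp⟩
  | succ k ih =>
    obtain ⟨u, hu, w, hw, rfl⟩ := mem_mul.1 (pow_succ L k ▸ hx)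
    obtain ⟨i, j, rfl, hlen⟩ := ih hu
    rcases hL w hw with hw | hw
    · exact ⟨i + 1, j, by ring, by simp only [List.length_append, hlen, hw]; ring⟩
    · exact ⟨i, j + 1, by ring, by simp only [List.length_append, hlen, hw]; ring⟩

theorem replicate_mem_pow {c : α} (ha : List.replicate a c ∈ L) (hb : List.replicate b c ∈ L)
    (i j : ℕ) : List.replicate (i * a + j * b) c ∈ L ^ (i + j) := by
  refine mem_pow.2 ⟨List.replicate i (List.replicate a c) ++ List.replicate j (List.replicate b c),
    by simp only [List.flatten_append, List.flatten_replicate_replicate, List.replicate_add],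
    by simp, ?_⟩
  simp only [List.mem_append, List.mem_replicate]
  rintro w (⟨-, rfl⟩ | ⟨-, rfl⟩) <;> assumption

end Language

theorem Nat.add_eq_mul_sub_one_of_add_mul_eq {i j n : ℕ} (hn : 1 ≤ n)
    (h : i + j * n = (i + j) * (n - 1)) : i + j = i * (n - 1) := by
  obtain ⟨m, rfl⟩ : ∃ m, n = m + 1 := ⟨n - 1, by omega⟩
  simp only [Nat.add_sub_cancel] at h ⊢
  nlinarith

/-- For `n ≥ 2`, with `A = {a, a^n}` and `B = {a^(n−1)}` over the one-letter
alphabet, the least `k ≥ 1` with `A^k ∩ B^k ≠ ∅` is `k = n − 1`. -/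
theorem unary_matched_powers_tight (n : ℕ) (hn : 2 ≤ n)
    (A B : Language (Fin 1))
    (hA : A = {x | x.length = 1 ∨ x.length = n})
    (hB : B = {x | x.length = n - 1}) :
    (∃ x, x ∈ A ^ (n - 1) ∧ x ∈ B ^ (n - 1)) ∧
    (∀ k : ℕ, 1 ≤ k → k < n - 1 → ¬ ∃ x, x ∈ A ^ k ∧ x ∈ B ^ k) := by
  have memA : ∀ x, x ∈ A ↔ x.length = 1 ∨ x.length = n := fun x ↦ by rw [hA]; exact Iff.rfl
  have memB : ∀ x, x ∈ B ↔ x.length = n - 1 := fun x ↦ by rw [hB]; exact Iff.rfl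
  constructor
  · refine ⟨List.replicate ((n - 1) * (n - 1)) 0, ?_, ?_⟩
    · have hsq : 1 * 1 + (n - 2) * n = (n - 1) * (n - 1) := by
        obtain ⟨m, rfl⟩ : ∃ m, n = m + 2 := ⟨n - 2, by omega⟩
        rw [show m + 2 - 1 = m + 1 by omega, Nat.add_sub_cancel]
        ring
      have h := Language.replicate_mem_pow (a := 1) (b := n) (c := 0) ((memA _).2 (by simp))
        ((memA _).2 (by simp)) 1 (n - 2)
      rwa [hsq, show 1 + (n - 2) = n - 1 by omega] at h
    · simpa using Language.replicate_mem_pow (a := n - 1) (b := n - 1) (c := 0)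
        ((memB _).2 (by simp)) ((memB _).2 (by simp)) (n - 1) 0
  · rintro k hk1 hk2 ⟨x, hxA, hxB⟩
    obtain ⟨i, j, rfl, hlenA⟩ :=
      Language.exists_length_eq_of_mem_pow (fun w ↦ (memA w).1) hxA
    obtain ⟨i', j', hk', hlenB⟩ := Language.exists_length_eq_of_mem_pow (a := n - 1)
      (b := n - 1) (fun w hw ↦ .inl ((memB w).1 hw)) hxB
    have hk : i + j = i * (n - 1) := Nat.add_eq_mul_sub_one_of_add_mul_eq (by omega) <| by
      rw [← hk', add_mul]; simpa using hlenA.symm.trans hlenB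
    have := Nat.le_of_dvd (by omega) (Dvd.intro_left i hk.symm)
    omega
end
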